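/- arXiv:2008.05784 — 15 statements merged into one kernel-verified Lean document; each statement's English description precedes it below -/
import Mathlib

section
/- If z(u) = Du + r is an affinely adjustable robust solution of the uncertain LCP with box uncertainty set U, then for every index i with r_i = 0, the i-th row of D restricted to the uncertain coordinates vanishes; that is, if r_i = 0 then D_{i,j} = 0 for all j with ū_j > 0. -/
open Matrix BigOperators
open scoped Classical

noncomputable section

/-- `u` lies in the box `[-ū, ū]`. -/
def inBox {n : ℕ} (ubar u : Fin n → ℝ) : Prop :=
  ∀ i, -ubar i ≤ u i ∧ u i ≤ ubar i

/-- `z` solves the LCP with matrix `M` and vector `q`. -/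
def IsLCPSol {n : ℕ} (M : Matrix (Fin n) (Fin n) ℝ) (q z : Fin n → ℝ) : Prop :=
  (∀ i, 0 ≤ z i) ∧ (∀ i, 0 ≤ (M.mulVec z + q) i) ∧
    ∑ i, z i * (M.mulVec z + q) i = 0

/-- `z(u) = D u + r` is an affinely adjustable robust solution of the
uncertain LCP with vector `q(u) = q̄ + u`. -/
def IsAAR {n : ℕ} (M : Matrix (Fin n) (Fin n) ℝ) (qbar ubar : Fin n → ℝ)
    (D : Matrix (Fin n) (Fin n) ℝ) (r : Fin n → ℝ) : Prop :=
  ∀ u, inBox ubar u → IsLCPSol M (qbar + u) (D.mulVec u + r)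

/-- if `z(u) = Du + r` is an AAR solution, then for every `i`
with `r_i = 0` the row `D_{i,·}` vanishes on the uncertain coordinates. -/
theorem stmt_1 (n : ℕ) (M : Matrix (Fin n) (Fin n) ℝ) (qbar ubar : Fin n → ℝ)
    (hubar : ∀ i, 0 ≤ ubar i)
    (D : Matrix (Fin n) (Fin n) ℝ) (r : Fin n → ℝ)
    (hDS : ∀ i j, ubar j = 0 → D i j = 0)
    (hAAR : IsAAR M qbar ubar D r) :
    ∀ i, r i = 0 → ∀ j, 0 < ubar j → D i j = 0 := by
  intro i hri j hj
  set u : Fin n → ℝ := fun k => if 0 ≤ D i k then -ubar k else ubar k with hu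
  have hbox : inBox ubar u := by
    intro k
    simp only [hu]
    split <;> constructor <;> linarith [hubar k]
  have hz := (hAAR u hbox).1 i
  have hzi : (D.mulVec u + r) i = -∑ k, |D i k| * ubar k := by
    simp only [Pi.add_apply, hri, add_zero, Matrix.mulVec, dotProduct,
      ← Finset.sum_neg_distrib]
    refine Finset.sum_congr rfl fun k _ => ?_
    simp only [hu]
    by_cases h : 0 ≤ D i k
    · rw [if_pos h, abs_of_nonneg h]; ring
    · rw [if_neg h, abs_of_neg (lt_of_not_ge h)]; ring
  rw [hzi] at hz
  have hsum : ∑ k, |D i k| * ubar k ≤ 0 := by linarith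
  have hterm : ∀ k ∈ Finset.univ, (0:ℝ) ≤ |D i k| * ubar k := fun k _ =>
    mul_nonneg (abs_nonneg _) (hubar k)
  have hall := (Finset.sum_eq_zero_iff_of_nonneg hterm).1
    (le_antisymm hsum (Finset.sum_nonneg hterm))
  have := hall j (Finset.mem_univ j)
  have habs : |D i j| = 0 := by
    rcases mul_eq_zero.1 this with h | h
    · exact h
    · exact absurd h (ne_of_gt hj)
  exact abs_eq_zero.1 habs
end
end

section
/- Let K = {i : r_i ≠ 0} and N = {i : r_i = 0}. Suppose z(u) = Du + r satisfies D_{i,·} = 0 for all i ∈ N. Then z(u) is an AAR solution of the uncertain LCP if and only if: (i) z_K(u) ≥ 0 for all u ∈ U; (ii) (M z(u) + q̄ + u)_K = 0 for all u ∈ U; and (iii) (M z(u) + q̄ + u)_N ≥ 0 for all u ∈ U. -/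
open Matrix BigOperators
open scoped Classical

noncomputable section

/-- with `K = supp r`, `N = [n]∖K`, and `D_{N,·} = 0`, the
function `z(u) = Du + r` is an AAR solution iff (i) `z_K(u) ≥ 0`,
(ii) `(Mz(u)+q̄+u)_K = 0`, and (iii) `(Mz(u)+q̄+u)_N ≥ 0` for all `u ∈ 𝒰`. -/
theorem stmt_2 (n : ℕ) (M : Matrix (Fin n) (Fin n) ℝ) (qbar ubar : Fin n → ℝ)
    (hubar : ∀ i, 0 ≤ ubar i)
    (D : Matrix (Fin n) (Fin n) ℝ) (r : Fin n → ℝ)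
    (hr : ∀ i, 0 ≤ r i)
    (hDN : ∀ i, r i = 0 → ∀ j, D i j = 0) :
    IsAAR M qbar ubar D r ↔
      ((∀ u, inBox ubar u → ∀ i, r i ≠ 0 → 0 ≤ (D.mulVec u + r) i) ∧
       (∀ u, inBox ubar u → ∀ i, r i ≠ 0 →
          (M.mulVec (D.mulVec u + r) + qbar + u) i = 0) ∧
       (∀ u, inBox ubar u → ∀ i, r i = 0 →
          0 ≤ (M.mulVec (D.mulVec u + r) + qbar + u) i)) := by
  constructor
  · intro hAAR
    -- key: each term of the complementarity sum is zero
    have hterm : ∀ u, inBox ubar u → ∀ i,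
        (D.mulVec u + r) i * (M.mulVec (D.mulVec u + r) + (qbar + u)) i = 0 := by
      intro u hu i
      obtain ⟨hz, hw, hsum⟩ := hAAR u hu
      have := (Finset.sum_eq_zero_iff_of_nonneg (fun j _ =>
        mul_nonneg (hz j) (hw j))).mp hsum i (Finset.mem_univ i)
      exact this
    refine ⟨fun u hu i _ => (hAAR u hu).1 i, ?_, ?_⟩
    · -- (ii)
      intro u hu i hri
      have hri' : 0 < r i := lt_of_le_of_ne (hr i) (Ne.symm hri)
      -- for t ∈ [0,1), z_i(t•u) > 0, hence w_i(t•u) = 0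
      have key : ∀ t : ℝ, 0 ≤ t → t < 1 →
          t * ((M.mulVec (D.mulVec u)) i + u i) + ((M.mulVec r) i + qbar i) = 0 := by
        intro t ht0 ht1
        have hu' : inBox ubar (t • u) := by
          intro j
          have h := hu j
          simp only [Pi.smul_apply, smul_eq_mul]
          constructor
          · nlinarith [h.1, h.2, hubar j]
          · nlinarith [h.1, h.2, hubar j]
        have hzpos : 0 < (D.mulVec (t • u) + r) i := by
          have hz1 : 0 ≤ (D.mulVec u + r) i := (hAAR u hu).1 i
          have : (D.mulVec (t • u) + r) i = t * (D.mulVec u) i + r i := by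
            simp [Matrix.mulVec_smul, Pi.add_apply, Pi.smul_apply, smul_eq_mul]
          rw [this]
          have : (D.mulVec u) i + r i ≥ 0 := by simpa [Pi.add_apply] using hz1
          nlinarith
        have hw0 := hterm (t • u) hu' i
        have := (mul_eq_zero.mp hw0).resolve_left (ne_of_gt hzpos)
        -- expand
        have hexp : (M.mulVec (D.mulVec (t • u) + r) + (qbar + t • u)) i
            = t * ((M.mulVec (D.mulVec u)) i + u i) + ((M.mulVec r) i + qbar i) := by
          simp [Matrix.mulVec_add, Matrix.mulVec_smul, Pi.add_apply, Pi.smul_apply,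
            smul_eq_mul]
          ring
        rw [hexp] at this
        exact this
      have h0 := key 0 le_rfl one_pos
      have hh := key (1/2) (by norm_num) (by norm_num)
      have hexp1 : (M.mulVec (D.mulVec u + r) + qbar + u) i
          = ((M.mulVec (D.mulVec u)) i + u i) + ((M.mulVec r) i + qbar i) := by
        simp [Matrix.mulVec_add, Pi.add_apply]
        ring
      rw [hexp1]
      linarith
    · -- (iii)
      intro u hu i _
      have := (hAAR u hu).2.1 i
      simpa [Pi.add_apply, add_assoc] using this
  · rintro ⟨h1, h2, h3⟩ u hu
    have hzN : ∀ i, r i = 0 → (D.mulVec u + r) i = 0 := by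
      intro i hri
      simp [Pi.add_apply, hri, Matrix.mulVec, dotProduct, hDN i hri]
    refine ⟨?_, ?_, ?_⟩
    · intro i
      by_cases hri : r i = 0
      · rw [hzN i hri]
      · exact h1 u hu i hri
    · intro i
      by_cases hri : r i = 0
      · have := h3 u hu i hri
        simpa [Pi.add_apply, add_assoc] using this
      · have := h2 u hu i hri
        have h' : (M.mulVec (D.mulVec u + r) + (qbar + u)) i = 0 := by
          simpa [Pi.add_apply, add_assoc] using this
        rw [h']
    · apply Finset.sum_eq_zero
      intro i _
      by_cases hri : r i = 0
      · rw [hzN i hri, zero_mul]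
      · have := h2 u hu i hri
        have h' : (M.mulVec (D.mulVec u + r) + (qbar + u)) i = 0 := by
          simpa [Pi.add_apply, add_assoc] using this
        rw [h', mul_zero]
end
end

section
/- A function z(u) = Du + r with D_{i,·} = 0 for all i ∉ J (where J ⊇ K ∩ ([n]∖[h]) is the set of adjustable nonzero indices) satisfies (M z(u) + q̄ + u)_K = 0 for all u in the box U if and only if: M_{K∩S, J} D_{J,U} = 0, M_{K∩U, J} D_{J, K∩U} = -I_{K∩U}, M_{K∩U, J} D_{J, N∩U} = 0, and M_K r_K = -q̄_K, where S = {i : ū_i = 0}, U (as an index set) = {i : ū_i > 0}, K = supp(r), N = [n]∖K. -/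
open Matrix BigOperators
open scoped Classical

noncomputable section

/-- with `S = {i : ū_i = 0}`, `U = {i : ū_i > 0}`,
`K = supp r`, `N = [n]∖K`, `J = K ∩ ([n]∖[h])`, and `D_{i,·} = 0` for `i ∉ J`,
`D_{·,S} = 0`: the function `z(u) = Du + r` satisfies `(Mz(u)+q̄+u)_K = 0`
for all `u` in the box iff the four systems of equations hold. -/
theorem stmt_4 (n h : ℕ) (M : Matrix (Fin n) (Fin n) ℝ) (qbar ubar : Fin n → ℝ)
    (hubar : ∀ i, 0 ≤ ubar i)
    (D : Matrix (Fin n) (Fin n) ℝ) (r : Fin n → ℝ)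
    (hDJ : ∀ i : Fin n, ¬(r i ≠ 0 ∧ h ≤ (i : ℕ)) → ∀ j, D i j = 0)
    (hDS : ∀ i j, ubar j = 0 → D i j = 0) :
    (∀ u, inBox ubar u → ∀ i, r i ≠ 0 →
        (M.mulVec (D.mulVec u + r) + qbar + u) i = 0) ↔
      ((∀ i : Fin n, r i ≠ 0 → ubar i = 0 → ∀ j, 0 < ubar j →
          ∑ l ∈ Finset.univ.filter (fun l : Fin n => r l ≠ 0 ∧ h ≤ (l : ℕ)),
            M i l * D l j = 0) ∧
       (∀ i : Fin n, r i ≠ 0 → 0 < ubar i → ∀ j : Fin n, r j ≠ 0 → 0 < ubar j →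
          ∑ l ∈ Finset.univ.filter (fun l : Fin n => r l ≠ 0 ∧ h ≤ (l : ℕ)),
            M i l * D l j = -(if i = j then (1 : ℝ) else 0)) ∧
       (∀ i : Fin n, r i ≠ 0 → 0 < ubar i → ∀ j : Fin n, r j = 0 → 0 < ubar j →
          ∑ l ∈ Finset.univ.filter (fun l : Fin n => r l ≠ 0 ∧ h ≤ (l : ℕ)),
            M i l * D l j = 0) ∧
       (∀ i : Fin n, r i ≠ 0 →
          ∑ l ∈ Finset.univ.filter (fun l : Fin n => r l ≠ 0),
            M i l * r l = -qbar i)) := by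
  classical
  have hAfull : ∀ i j : Fin n,
      (∑ l ∈ Finset.univ.filter (fun l : Fin n => r l ≠ 0 ∧ h ≤ (l : ℕ)),
        M i l * D l j) = ∑ l, M i l * D l j := by
    intro i j
    rw [Finset.sum_filter]
    refine Finset.sum_congr rfl fun l _ => ?_
    split_ifs with hl
    · rfl
    · rw [hDJ l hl, mul_zero]
  have hrfull : ∀ i : Fin n,
      (∑ l ∈ Finset.univ.filter (fun l : Fin n => r l ≠ 0), M i l * r l)
        = ∑ l, M i l * r l := by
    intro i
    rw [Finset.sum_filter]
    refine Finset.sum_congr rfl fun l _ => ?_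
    split_ifs with hl
    · rfl
    · rw [not_not.mp hl, mul_zero]
  have hexp : ∀ (u : Fin n → ℝ) (i : Fin n),
      (M.mulVec (D.mulVec u + r) + qbar + u) i
        = (∑ j, (∑ l, M i l * D l j) * u j) + u i
            + ((∑ l, M i l * r l) + qbar i) := by
    intro u i
    simp only [Pi.add_apply, Matrix.mulVec, dotProduct, mul_add,
      Finset.mul_sum, Finset.sum_add_distrib]
    rw [Finset.sum_comm]
    have : ∀ k, (∑ l, M i l * D l k) * u k = ∑ l, M i l * (D l k * u k) := by
      intro k
      rw [Finset.sum_mul]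
      exact Finset.sum_congr rfl fun l _ => by ring
    simp only [this]
    ring
  constructor
  · intro H
    have hzero : ∀ i, r i ≠ 0 → (∑ l, M i l * r l) + qbar i = 0 := by
      intro i hi
      have hbox : inBox ubar (0 : Fin n → ℝ) := by
        intro k
        exact ⟨neg_nonpos.mpr (hubar k), hubar k⟩
      have h0 := H 0 hbox i hi
      rw [hexp] at h0
      simpa using h0
    have hcoef : ∀ i, r i ≠ 0 → ∀ j, 0 < ubar j →
        (∑ l, M i l * D l j) + (if i = j then (1 : ℝ) else 0) = 0 := by
      intro i hi j hj
      set u : Fin n → ℝ := fun k => if k = j then ubar j else 0 with hu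
      have hbox : inBox ubar u := by
        intro k
        by_cases hk : k = j
        · subst hk
          simp only [u, if_pos rfl]
          exact ⟨by linarith [hubar k], le_refl _⟩
        · simp only [u, if_neg hk]
          exact ⟨neg_nonpos.mpr (hubar k), hubar k⟩
      have h1 := H u hbox i hi
      rw [hexp, hzero i hi, add_zero] at h1
      have hsum : (∑ k, (∑ l, M i l * D l k) * u k)
          = (∑ l, M i l * D l j) * ubar j := by
        simp [u, mul_ite, mul_zero]
      rw [hsum] at h1
      have hui : u i = (if i = j then (1 : ℝ) else 0) * ubar j := by
        by_cases hij : i = j <;> simp [u, hij]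
      rw [hui] at h1
      have h2 : ((∑ l, M i l * D l j) + (if i = j then (1 : ℝ) else 0)) * ubar j = 0 := by
        rw [add_mul]; exact h1
      exact (mul_eq_zero.mp h2).resolve_right (ne_of_gt hj)
    refine ⟨?_, ?_, ?_, ?_⟩
    · intro i hi hiS j hj
      have hij : i ≠ j := by
        rintro rfl; rw [hiS] at hj; exact lt_irrefl 0 hj
      have := hcoef i hi j hj
      rw [if_neg hij, add_zero] at this
      rw [hAfull]; exact this
    · intro i hi _ j hjr hjU
      have := hcoef i hi j hjU
      rw [hAfull]
      linarith [this]
    · intro i hi _ j hjr hjU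
      have hij : i ≠ j := by
        rintro rfl; exact hi hjr
      have := hcoef i hi j hjU
      rw [if_neg hij, add_zero] at this
      rw [hAfull]; exact this
    · intro i hi
      rw [hrfull]
      linarith [hzero i hi]
  · rintro ⟨hA, hB, hC, hD⟩ u hu i hi
    rw [hexp]
    have hc : (∑ l, M i l * r l) + qbar i = 0 := by
      rw [← hrfull, hD i hi]; ring
    rw [hc, add_zero]
    have hsplit : (∑ j, (∑ l, M i l * D l j) * u j) + u i
        = ∑ j, ((∑ l, M i l * D l j) + (if i = j then (1 : ℝ) else 0)) * u j := by
      simp only [add_mul, Finset.sum_add_distrib, ite_mul, one_mul, zero_mul,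
        Finset.sum_ite_eq, Finset.mem_univ, if_true]
    rw [hsplit]
    apply Finset.sum_eq_zero
    intro j _
    by_cases hjz : ubar j = 0
    · have huj : u j = 0 := by
        have h1 := (hu j).1
        have h2 := (hu j).2
        rw [hjz] at h1 h2
        linarith
      rw [huj, mul_zero]
    · have hjU : 0 < ubar j := lt_of_le_of_ne (hubar j) (Ne.symm hjz)
      suffices hz : (∑ l, M i l * D l j) + (if i = j then (1 : ℝ) else 0) = 0 by
        rw [hz, zero_mul]
      by_cases hiz : ubar i = 0
      · have hij : i ≠ j := by rintro rfl; exact hjz hiz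
        rw [if_neg hij, add_zero, ← hAfull]
        exact hA i hi hiz j hjU
      · have hiU : 0 < ubar i := lt_of_le_of_ne (hubar i) (Ne.symm hiz)
        by_cases hjr : r j = 0
        · have hij : i ≠ j := by rintro rfl; exact hi hjr
          rw [if_neg hij, add_zero, ← hAfull]
          exact hC i hi hiU j hjr hjU
        · have := hB i hi hiU j hjr hjU
          rw [hAfull] at this
          rw [this]; ring
end
end

section
/- Suppose S ⊆ [h], i.e., all certain entries correspond to non-adjustable variables (so J ⊆ U). Then matrices D and r satisfy M_{K∩S,J} D_{J,U} = 0, M_{K∩U,J} D_{J,K∩U} = -I_{K∩U}, and M_{K∩U,J} D_{J,N∩U} = 0 if and only if: D_J = -M_J^{-1} (in particular M_J is invertible), D_{J,i} = 0 for all i ∈ N ∩ U, I ∩ U = ∅ (where I = K ∩ [h]), and M_{I,J} = 0. -/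
open Matrix BigOperators
open scoped Classical

noncomputable section

lemma row_ann {m : Type*} [Fintype m] [DecidableEq m] (A : Matrix m m ℝ)
    (hdet : IsUnit A.det) (v : m → ℝ) (hv : v ᵥ* A⁻¹ = 0) : v = 0 := by
  have h2 := congrArg (· ᵥ* A) hv
  simpa [Matrix.vecMul_vecMul, Matrix.nonsing_inv_mul A hdet] using h2

lemma col_ann {m : Type*} [Fintype m] [DecidableEq m] (A : Matrix m m ℝ)
    (hdet : IsUnit A.det) (w : m → ℝ) (hw : A *ᵥ w = 0) : w = 0 := by
  have h2 := congrArg (A⁻¹ *ᵥ ·) hw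
  simpa [Matrix.mulVec_mulVec, Matrix.nonsing_inv_mul A hdet] using h2

/-- assume `S ⊆ [h]`. Then `D` and `r` satisfy the equations
`M_{K∩S,J} D_{J,U} = 0`, `M_{K∩U,J} D_{J,K∩U} = -I`, `M_{K∩U,J} D_{J,N∩U} = 0`
iff `M_J` is invertible with `D_J = -M_J⁻¹`, `D_{J,i} = 0` for `i ∈ N∩U`,
`I ∩ U = ∅` and `M_{I,J} = 0`. -/
theorem stmt_5 (n h : ℕ) (M : Matrix (Fin n) (Fin n) ℝ) (ubar : Fin n → ℝ)
    (hubar : ∀ i, 0 ≤ ubar i)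
    (hS : ∀ i : Fin n, ubar i = 0 → (i : ℕ) < h)
    (D : Matrix (Fin n) (Fin n) ℝ) (r : Fin n → ℝ)
    (hDJ : ∀ i : Fin n, ¬(r i ≠ 0 ∧ h ≤ (i : ℕ)) → ∀ j, D i j = 0)
    (hDS : ∀ i j, ubar j = 0 → D i j = 0) :
    ((∀ i : Fin n, r i ≠ 0 → ubar i = 0 → ∀ j, 0 < ubar j →
        ∑ l ∈ Finset.univ.filter (fun l : Fin n => r l ≠ 0 ∧ h ≤ (l : ℕ)),
          M i l * D l j = 0) ∧
     (∀ i : Fin n, r i ≠ 0 → 0 < ubar i → ∀ j : Fin n, r j ≠ 0 → 0 < ubar j →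
        ∑ l ∈ Finset.univ.filter (fun l : Fin n => r l ≠ 0 ∧ h ≤ (l : ℕ)),
          M i l * D l j = -(if i = j then (1 : ℝ) else 0)) ∧
     (∀ i : Fin n, r i ≠ 0 → 0 < ubar i → ∀ j : Fin n, r j = 0 → 0 < ubar j →
        ∑ l ∈ Finset.univ.filter (fun l : Fin n => r l ≠ 0 ∧ h ≤ (l : ℕ)),
          M i l * D l j = 0)) ↔
      (IsUnit (Matrix.of fun i j : {l : Fin n // r l ≠ 0 ∧ h ≤ (l : ℕ)} =>
          M i.1 j.1).det ∧
       (∀ i j : {l : Fin n // r l ≠ 0 ∧ h ≤ (l : ℕ)},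
          D i.1 j.1 =
            -(((Matrix.of fun i j : {l : Fin n // r l ≠ 0 ∧ h ≤ (l : ℕ)} =>
                M i.1 j.1))⁻¹ i j)) ∧
       (∀ (i : {l : Fin n // r l ≠ 0 ∧ h ≤ (l : ℕ)}) (j : Fin n),
          r j = 0 → 0 < ubar j → D i.1 j = 0) ∧
       (∀ i : Fin n, r i ≠ 0 → (i : ℕ) < h → ¬ 0 < ubar i) ∧
       (∀ i : Fin n, r i ≠ 0 → (i : ℕ) < h →
          ∀ j : {l : Fin n // r l ≠ 0 ∧ h ≤ (l : ℕ)}, M i j.1 = 0)) := by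
  classical
  set A : Matrix {l : Fin n // r l ≠ 0 ∧ h ≤ (l : ℕ)}
      {l : Fin n // r l ≠ 0 ∧ h ≤ (l : ℕ)} ℝ :=
    Matrix.of fun i j : {l : Fin n // r l ≠ 0 ∧ h ≤ (l : ℕ)} => M i.1 j.1 with hA
  set B : Matrix {l : Fin n // r l ≠ 0 ∧ h ≤ (l : ℕ)}
      {l : Fin n // r l ≠ 0 ∧ h ≤ (l : ℕ)} ℝ :=
    Matrix.of fun i j : {l : Fin n // r l ≠ 0 ∧ h ≤ (l : ℕ)} => D i.1 j.1 with hB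
  have hsum : ∀ f : Fin n → ℝ,
      ∑ l ∈ Finset.univ.filter (fun l : Fin n => r l ≠ 0 ∧ h ≤ (l : ℕ)), f l
        = ∑ l : {l : Fin n // r l ≠ 0 ∧ h ≤ (l : ℕ)}, f l.1 := by
    intro f
    exact Finset.sum_subtype _ (by simp) f
  have hub : ∀ l : {l : Fin n // r l ≠ 0 ∧ h ≤ (l : ℕ)}, 0 < ubar l.1 := by
    intro l
    rcases lt_or_eq_of_le (hubar l.1) with h' | h'
    · exact h'
    · exact absurd (hS l.1 h'.symm) (not_lt.2 l.2.2)
  constructor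
  · rintro ⟨h1, h2, h3⟩
    have hAB : A * B = -1 := by
      ext i j
      have := h2 i.1 i.2.1 (hub i) j.1 j.2.1 (hub j)
      rw [hsum] at this
      simpa [Matrix.mul_apply, hA, hB, Matrix.one_apply, Subtype.ext_iff] using this
    have hright : A * (-B) = 1 := by rw [Matrix.mul_neg, hAB, neg_neg]
    have hdet : IsUnit A.det := Matrix.isUnit_det_of_right_inverse hright
    have hinv : A⁻¹ = -B := Matrix.inv_eq_right_inv hright
    -- row annihilator: if v ᵥ* B = 0 then v = 0
    have hrow : ∀ v : {l : Fin n // r l ≠ 0 ∧ h ≤ (l : ℕ)} → ℝ,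
        (∀ j : {l : Fin n // r l ≠ 0 ∧ h ≤ (l : ℕ)}, ∑ l, v l * D l.1 j.1 = 0) →
        ∀ l, v l = 0 := by
      intro v hv l
      have hvB : v ᵥ* A⁻¹ = 0 := by
        rw [hinv]
        funext j
        simp only [Matrix.vecMul, Matrix.neg_apply, Pi.zero_apply, dotProduct,
          Matrix.neg_apply, hB, Matrix.of_apply, mul_neg]
        rw [← neg_eq_zero] at *
        simpa [Finset.sum_neg_distrib] using hv j
      have := row_ann A hdet v hvB
      exact congrFun this l
    have hIU : ∀ i : Fin n, r i ≠ 0 → (i : ℕ) < h → ¬ 0 < ubar i := by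
      intro i hri hih hui
      -- the row M i restricted to J annihilates B
      have hv : ∀ l : {l : Fin n // r l ≠ 0 ∧ h ≤ (l : ℕ)}, M i l.1 = 0 := by
        apply hrow
        intro j
        have := h2 i hri hui j.1 j.2.1 (hub j)
        rw [hsum] at this
        have hne : i ≠ j.1 := by
          intro e; rw [e] at hih; exact absurd j.2.2 (not_le.2 hih)
        simpa [hne] using this
      have := h2 i hri hui i hri hui
      rw [hsum] at this
      simp only [if_pos rfl] at this
      rw [Finset.sum_eq_zero (fun l _ => by rw [hv l, zero_mul])] at this
      norm_num at this
    refine ⟨hdet, ?_, ?_, hIU, ?_⟩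
    · intro i j
      have : B i j = -(A⁻¹ i j) := by rw [hinv]; simp
      simpa [hB] using this
    · intro i j hrj huj
      have hw : ∀ l : {l : Fin n // r l ≠ 0 ∧ h ≤ (l : ℕ)}, D l.1 j = 0 := by
        intro l
        have hAw : A *ᵥ (fun l : {l : Fin n // r l ≠ 0 ∧ h ≤ (l : ℕ)} => D l.1 j) = 0 := by
          funext i'
          have := h3 i'.1 i'.2.1 (hub i') j hrj huj
          rw [hsum] at this
          simpa [Matrix.mulVec, dotProduct, hA] using this
        exact congrFun (col_ann A hdet _ hAw) l
      exact hw i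
    · intro i hri hih j
      have hie : ubar i = 0 := le_antisymm (not_lt.1 (hIU i hri hih)) (hubar i)
      revert j
      apply hrow
      intro j
      have := h1 i hri hie j.1 (hub j)
      rw [hsum] at this
      exact this
  · rintro ⟨hdet, hDb, hDc, hIU, hMIJ⟩
    have hBinv : B = -A⁻¹ := by
      ext i j
      simpa [hB] using hDb i j
    have hAB : A * B = -1 := by
      rw [hBinv, Matrix.mul_neg, Matrix.mul_nonsing_inv A hdet]
    refine ⟨?_, ?_, ?_⟩
    · intro i hri hie j huj
      rw [hsum]
      have hih : (i : ℕ) < h := hS i hie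
      exact Finset.sum_eq_zero fun l _ => by rw [hMIJ i hri hih l, zero_mul]
    · intro i hri hui j hrj huj
      have hih : h ≤ (i : ℕ) := le_of_not_gt fun hc => hIU i hri hc hui
      have hjh : h ≤ (j : ℕ) := le_of_not_gt fun hc => hIU j hrj hc huj
      have := congrFun (congrFun hAB ⟨i, hri, hih⟩) ⟨j, hrj, hjh⟩
      rw [hsum]
      simp only [Matrix.mul_apply, Matrix.neg_apply, Matrix.one_apply, hA, hB,
        Matrix.of_apply] at this
      rw [this]
      congr 1
      simp [Subtype.ext_iff]
    · intro i hri hui j hrj huj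
      rw [hsum]
      have hih : h ≤ (i : ℕ) := le_of_not_gt fun hc => hIU i hri hc hui
      exact Finset.sum_eq_zero fun l _ => by rw [hDc l j hrj huj, mul_zero]
end
end

section
/- If the uncertainty set is full-dimensional (S = ∅, i.e., ū_i > 0 for all i) and z(u) = Du + r is an AAR solution of the uncertain LCP, then all non-adjustable variables are zero: r_i = 0 for all i ∈ [h]. -/
/-!
Call a coordinate `j` active if `z_j(u) ≠ 0` somewhere on the box. If `f ≥ 0` and `g` are affine
with `f g = 0` on a convex set and `f` is nonzero at one point, then `g` vanishes on the whole set;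
so for active `j` the slack `w_j(u) = ((M D + I) u + M r + q̄)_j` vanishes on the whole box, and
since the box is full-dimensional row `j` of `M D + I` is zero. For inactive `j` the same reasoning
shows that row `j` of `D` is zero. Hence `M D = -I` on the active rows, and restricted to the active
coordinates `D` is invertible, while a non-adjustable `i` with `r_i ≠ 0` would be active with a
zero row of `D`.
-/

open Matrix BigOperators
open scoped Classical

noncomputable section

theorem setOf_inBox {n : ℕ} (ubar : Fin n → ℝ) : {u | inBox ubar u} = Set.Icc (-ubar) ubar := by
  ext u
  simp only [inBox, Set.mem_ofPred_eq, Set.mem_Icc, Pi.le_def, Pi.neg_apply, forall_and]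

theorem inBox_zero {n : ℕ} {ubar : Fin n → ℝ} (hubar : ∀ i, 0 ≤ ubar i) : inBox ubar 0 :=
  fun i => ⟨by simpa using hubar i, hubar i⟩

theorem inBox_single {n : ℕ} {ubar : Fin n → ℝ} (hubar : ∀ i, 0 ≤ ubar i) (k : Fin n) :
    inBox ubar (Pi.single k (ubar k)) := by
  intro i
  rcases eq_or_ne i k with rfl | hik
  · simpa using hubar i
  · simpa [Pi.single_eq_of_ne hik] using hubar i

/-- At the midpoint of `x₀` and `x` the function `f` is still positive, so `g` vanishes there. -/
theorem AffineMap.apply_eq_zero_of_complementary {E ι : Type*} [AddCommGroup E] [Module ℝ E]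
    {S : Set E} (hS : Convex ℝ S) (f g : E →ᵃ[ℝ] (ι → ℝ)) (j : ι)
    (hf : ∀ x ∈ S, 0 ≤ f x j) (hfg : ∀ x ∈ S, f x j * g x j = 0)
    {x₀ : E} (hx₀ : x₀ ∈ S) (hfx₀ : f x₀ j ≠ 0) {x : E} (hx : x ∈ S) : g x j = 0 := by
  have hmid : ∀ φ : E →ᵃ[ℝ] (ι → ℝ), φ (midpoint ℝ x₀ x) j = (φ x₀ j + φ x j) / 2 := by
    intro φ
    rw [φ.map_midpoint, midpoint_eq_smul_add]
    simp only [Pi.smul_apply, Pi.add_apply, smul_eq_mul, invOf_eq_inv]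
    ring
  have hf₀ : 0 < f x₀ j := (hf x₀ hx₀).lt_of_ne' hfx₀
  have hg₀ : g x₀ j = 0 := (mul_eq_zero.mp (hfg x₀ hx₀)).resolve_left hfx₀
  have hgm : g (midpoint ℝ x₀ x) j = 0 := by
    refine (mul_eq_zero.mp (hfg _ (hS.midpoint_mem hx₀ hx))).resolve_left ?_
    rw [hmid]
    linarith [hf x hx]
  rw [hmid, hg₀] at hgm
  linarith

def Matrix.mulVecAffine {m n R : Type*} [Fintype n] [CommRing R] (A : Matrix m n R) (b : m → R) :
    (n → R) →ᵃ[R] (m → R) :=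
  A.mulVecLin.toAffineMap + AffineMap.const R _ b

@[simp]
theorem Matrix.mulVecAffine_apply {m n R : Type*} [Fintype n] [CommRing R] (A : Matrix m n R)
    (b : m → R) (u : n → R) : A.mulVecAffine b u = A *ᵥ u + b := by
  simp [Matrix.mulVecAffine]

theorem IsLCPSol.mul_eq_zero {n : ℕ} {M : Matrix (Fin n) (Fin n) ℝ} {q z : Fin n → ℝ}
    (hz : IsLCPSol M q z) (j : Fin n) : z j * (M *ᵥ z + q) j = 0 :=
  (Finset.sum_eq_zero_iff_of_nonneg fun i _ => mul_nonneg (hz.1 i) (hz.2.1 i)).mp hz.2.2 j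
    (Finset.mem_univ j)

theorem mulVec_mulVec_add_add {n : ℕ} (M D : Matrix (Fin n) (Fin n) ℝ) (qbar r u : Fin n → ℝ) :
    M *ᵥ (D *ᵥ u + r) + (qbar + u) = (M * D + 1) *ᵥ u + (M *ᵥ r + qbar) := by
  rw [Matrix.mulVec_add, Matrix.mulVec_mulVec, Matrix.add_mulVec, Matrix.one_mulVec]
  abel

theorem IsAAR.slack_eq_zero_of_ne_zero {n : ℕ} {M : Matrix (Fin n) (Fin n) ℝ}
    {qbar ubar : Fin n → ℝ} {D : Matrix (Fin n) (Fin n) ℝ} {r : Fin n → ℝ}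
    (hAAR : IsAAR M qbar ubar D r) {u₀ : Fin n → ℝ} {j : Fin n} (hu₀ : inBox ubar u₀)
    (hz : (D *ᵥ u₀ + r) j ≠ 0) {u : Fin n → ℝ} (hu : inBox ubar u) :
    ((M * D + 1 : Matrix (Fin n) (Fin n) ℝ) *ᵥ u + (M *ᵥ r + qbar)) j = 0 := by
  have hS : Convex ℝ {u | inBox ubar u} := setOf_inBox ubar ▸ convex_Icc _ _
  refine (D.mulVecAffine r).apply_eq_zero_of_complementary hS
    ((M * D + 1).mulVecAffine (M *ᵥ r + qbar)) j (fun v hv => (hAAR v hv).1 j) (fun v hv => ?_)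
    (x₀ := u₀) hu₀ (by simpa using hz) (x := u) hu
  have hcompl := (hAAR v hv).mul_eq_zero j
  rw [mulVec_mulVec_add_add] at hcompl
  simpa using hcompl

theorem Matrix.row_eq_zero_of_mulVec_add_eq_zero_on_inBox {n : ℕ} {ubar : Fin n → ℝ}
    (hubar : ∀ i, 0 < ubar i) {A : Matrix (Fin n) (Fin n) ℝ} {b : Fin n → ℝ} {j : Fin n}
    (h : ∀ u, inBox ubar u → (A *ᵥ u + b) j = 0) (k : Fin n) : A j k = 0 := by
  have hubar' : ∀ i, 0 ≤ ubar i := fun i => (hubar i).le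
  have hb : b j = 0 := by simpa using h 0 (inBox_zero hubar')
  have hk : A j k * ubar k = 0 := by
    simpa [Matrix.mulVec_single, hb, or_comm] using h _ (inBox_single hubar' k)
  exact (mul_eq_zero.mp hk).resolve_right (hubar k).ne'

theorem Matrix.exists_ne_zero_of_mul_add_one_eq_zero {ι R : Type*} [Fintype ι] [DecidableEq ι]
    [CommRing R] [Nontrivial R] {M D : Matrix ι ι R} (p : ι → Prop) [DecidablePred p]
    (hD : ∀ m, ¬ p m → ∀ k, D m k = 0) (hMD : ∀ j, p j → ∀ k, (M * D + 1) j k = 0)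
    {i : ι} (hi : p i) : ∃ k, D i k ≠ 0 := by
  set M' : Matrix {j // p j} {j // p j} R := M.submatrix (↑) (↑)
  set D' : Matrix {j // p j} {j // p j} R := D.submatrix (↑) (↑)
  have hMD' : M' * -D' = 1 := by
    ext a b
    have hout : ∑ m : {j // ¬ p j}, M a m * D m b = 0 :=
      Fintype.sum_eq_zero _ fun m => by rw [hD m m.2 b, mul_zero]
    have hab := hMD a a.2 b
    rw [Matrix.add_apply, Matrix.mul_apply, ← Fintype.sum_subtype_add_sum_subtype p, hout,
      add_zero, Matrix.one_apply] at hab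
    simp only [← Subtype.ext_iff] at hab
    rw [Matrix.mul_neg, Matrix.neg_apply, Matrix.mul_apply, Matrix.one_apply]
    simp only [M', D', Matrix.submatrix_apply]
    linear_combination -hab
  have hii : (-D' * M') ⟨i, hi⟩ ⟨i, hi⟩ = 1 := by
    rw [mul_eq_one_comm.mp hMD', Matrix.one_apply_eq]
  by_contra! hrow
  simp [Matrix.mul_apply, D', hrow] at hii

/-- if the box uncertainty set is full-dimensional and
`z(u) = Du + r` is an AAR solution with `h` non-adjustable variables
(`D_{[h],·} = 0`), then `r_i = 0` for all `i ∈ [h]`. -/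
theorem stmt_6 (n h : ℕ) (M : Matrix (Fin n) (Fin n) ℝ) (qbar ubar : Fin n → ℝ)
    (hubar : ∀ i, 0 < ubar i)
    (D : Matrix (Fin n) (Fin n) ℝ) (r : Fin n → ℝ)
    (hDh : ∀ i : Fin n, (i : ℕ) < h → ∀ j, D i j = 0)
    (hAAR : IsAAR M qbar ubar D r) :
    ∀ i : Fin n, (i : ℕ) < h → r i = 0 := by
  intro i hi
  by_contra hri
  let active : Fin n → Prop := fun j => ∃ u, inBox ubar u ∧ (D *ᵥ u + r) j ≠ 0
  have hactive : active i := ⟨0, inBox_zero fun k => (hubar k).le, by simpa using hri⟩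
  have hD : ∀ m, ¬ active m → ∀ k, D m k = 0 := fun m hm =>
    Matrix.row_eq_zero_of_mulVec_add_eq_zero_on_inBox hubar fun u hu => by
      by_contra hne
      exact hm ⟨u, hu, hne⟩
  have hMD : ∀ j, active j → ∀ k, (M * D + 1) j k = 0 := fun j ⟨_, hu₀, hz⟩ =>
    Matrix.row_eq_zero_of_mulVec_add_eq_zero_on_inBox hubar fun _ hu =>
      hAAR.slack_eq_zero_of_ne_zero hu₀ hz hu
  obtain ⟨k, hk⟩ := Matrix.exists_ne_zero_of_mul_add_one_eq_zero active hD hMD hactive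
  exact hk (hDh i hi k)
end
end

section
/- Suppose S = ∅ and there exists J ⊆ [n]∖[h] with M_J invertible such that, with A^J_{i,j} := -|(M_J^{-1})_{i,j} ū_j| for i,j ∈ J and C^J_{i,j} := -|M_{i,·}(M_J^{-1})_{·,j} ū_j| for i ∈ N, j ∈ J: (i) Σ_{j∈J} A^J_{J,j} - M_J^{-1} q̄_J ≥ 0 and (ii) Σ_{j∈J} C^J_{N,j} - ū_N - M_{N,J} M_J^{-1} q̄_J + q̄_N ≥ 0. Then there exists an AAR solution of the uncertain LCP. -/
/-!
Take the complementary solution with basis `J`: `z_J(u) = -M_J⁻¹ (q̄_J + u_J)` and `z_N(u) = 0`.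
It is affine in `u`, vanishes on the first `h` coordinates because `J` avoids them, and makes
`(M z(u) + q̄ + u)_J = 0`, so it is an AAR solution as soon as `z_J(u) ≥ 0` and
`(M z(u) + q̄ + u)_N ≥ 0` on the box. Both are affine in `u`, and their minima over the box are
the left-hand sides of (i) and (ii).
-/

open Matrix BigOperators
open scoped Classical

noncomputable section

/-- The principal submatrix of `M` indexed by the finset `J`. -/
def subM {n : ℕ} (M : Matrix (Fin n) (Fin n) ℝ) (J : Finset (Fin n)) :
    Matrix J J ℝ :=
  Matrix.of fun i j => M i.1 j.1

/-- The subvector of `q` indexed by `J`. -/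
def subV {n : ℕ} (q : Fin n → ℝ) (J : Finset (Fin n)) : J → ℝ :=
  fun i => q i.1

lemma dotProduct_le_sum_abs_mul {ι : Type*} [Fintype ι] (a : ι → ℝ) {u ub : ι → ℝ}
    (hu : ∀ j, |u j| ≤ ub j) : a ⬝ᵥ u ≤ ∑ j, |a j * ub j| := by
  refine Finset.sum_le_sum fun j _ => ?_
  calc a j * u j ≤ |a j| * |u j| := (le_abs_self _).trans (abs_mul _ _).le
    _ ≤ |a j| * ub j := mul_le_mul_of_nonneg_left (hu j) (abs_nonneg _)
    _ = |a j * ub j| := by rw [abs_mul, abs_of_nonneg ((abs_nonneg _).trans (hu j))]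

lemma inBox.abs_le {n : ℕ} {ubar u : Fin n → ℝ} (hu : inBox ubar u) (i : Fin n) :
    |u i| ≤ ubar i :=
  _root_.abs_le.mpr (hu i)

lemma isLCPSol_of_complementary {n : ℕ} {M : Matrix (Fin n) (Fin n) ℝ} {q z : Fin n → ℝ}
    (hz : ∀ i, 0 ≤ z i) (hw : ∀ i, 0 ≤ (M *ᵥ z + q) i)
    (hzw : ∀ i, z i = 0 ∨ (M *ᵥ z + q) i = 0) : IsLCPSol M q z :=
  ⟨hz, hw, Finset.sum_eq_zero fun i _ => (hzw i).elim (by simp [·]) (by simp [·])⟩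

section ExtendByZero

variable {n : ℕ} {J : Finset (Fin n)}

def extendByZero (J : Finset (Fin n)) (v : J → ℝ) : Fin n → ℝ :=
  fun i => if hi : i ∈ J then v ⟨i, hi⟩ else 0

def extendByZeroMatrix (J : Finset (Fin n)) (A : Matrix J J ℝ) : Matrix (Fin n) (Fin n) ℝ :=
  fun i => if hi : i ∈ J then extendByZero J (A ⟨i, hi⟩) else 0

@[simp]
lemma extendByZero_of_mem (v : J → ℝ) {i : Fin n} (hi : i ∈ J) :
    extendByZero J v i = v ⟨i, hi⟩ :=
  dif_pos hi

@[simp]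
lemma extendByZero_of_not_mem (v : J → ℝ) {i : Fin n} (hi : i ∉ J) :
    extendByZero J v i = 0 :=
  dif_neg hi

lemma dotProduct_extendByZero (w : Fin n → ℝ) (v : J → ℝ) :
    w ⬝ᵥ extendByZero J v = subV w J ⬝ᵥ v := by
  simp only [dotProduct]
  rw [← Finset.sum_subset J.subset_univ fun i _ hi => by simp [hi], ← Finset.sum_coe_sort]
  simp [subV]

lemma extendByZeroMatrix_mulVec (A : Matrix J J ℝ) (u : Fin n → ℝ) :
    extendByZeroMatrix J A *ᵥ u = extendByZero J (A *ᵥ subV u J) := by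
  funext i
  by_cases hi : i ∈ J
  · simp [extendByZeroMatrix, mulVec, hi, dotProduct_comm _ u, dotProduct_extendByZero,
      dotProduct_comm (subV u J)]
  · simp [extendByZeroMatrix, mulVec, hi]

lemma subV_add (p q : Fin n → ℝ) : subV (p + q) J = subV p J + subV q J :=
  rfl

lemma mulVec_extendByZero_apply (M : Matrix (Fin n) (Fin n) ℝ) (v : J → ℝ) (i : Fin n) :
    (M *ᵥ extendByZero J v) i = subV (M i) J ⬝ᵥ v :=
  dotProduct_extendByZero _ _

theorem isLCPSol_extendByZero_of_basis {M : Matrix (Fin n) (Fin n) ℝ}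
    (hinv : IsUnit (subM M J).det) {q : Fin n → ℝ}
    (hz : ∀ j, 0 ≤ -((subM M J)⁻¹ *ᵥ subV q J) j)
    (hw : ∀ i ∉ J, 0 ≤ q i - subV (M i) J ⬝ᵥ ((subM M J)⁻¹ *ᵥ subV q J)) :
    IsLCPSol M q (extendByZero J (-((subM M J)⁻¹ *ᵥ subV q J))) := by
  have hw_mem : ∀ i ∈ J, (M *ᵥ extendByZero J (-((subM M J)⁻¹ *ᵥ subV q J)) + q) i = 0 := by
    intro i hi
    have hrow : subV (M i) J = fun j => subM M J ⟨i, hi⟩ j := rfl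
    rw [Pi.add_apply, mulVec_extendByZero_apply, hrow, ← mulVec, mulVec_neg, mulVec_mulVec,
      mul_nonsing_inv _ hinv, one_mulVec]
    simp [subV]
  refine isLCPSol_of_complementary (fun i => ?_) (fun i => ?_) (fun i => ?_)
  · by_cases hi : i ∈ J <;> simp [hi, hz]
  · by_cases hi : i ∈ J
    · exact (hw_mem i hi).ge
    · simpa [mulVec_extendByZero_apply, sub_eq_neg_add] using hw i hi
  · by_cases hi : i ∈ J
    · exact .inr (hw_mem i hi)
    · exact .inl (extendByZero_of_not_mem _ hi)

lemma extendByZero_neg_mulVec_subV_add (B : Matrix J J ℝ) (q u : Fin n → ℝ) :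
    extendByZero J (-(B *ᵥ subV (q + u) J))
      = -extendByZeroMatrix J B *ᵥ u + -extendByZero J (B *ᵥ subV q J) := by
  funext i
  by_cases hi : i ∈ J
  · simp [neg_mulVec, extendByZeroMatrix_mulVec, hi, subV_add, mulVec_add, add_comm]
  · simp [neg_mulVec, extendByZeroMatrix_mulVec, hi]

end ExtendByZero

theorem stmt_8_general (n h : ℕ) (M : Matrix (Fin n) (Fin n) ℝ) (qbar ubar : Fin n → ℝ)
    (J : Finset (Fin n)) (hJh : ∀ i ∈ J, h ≤ (i : ℕ))
    (hinv : IsUnit (subM M J).det)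
    (hA : ∀ i : J,
      0 ≤ (∑ j : J, -|((subM M J)⁻¹ i j) * ubar j.1|)
          - ((subM M J)⁻¹.mulVec (subV qbar J)) i)
    (hC : ∀ i : Fin n, i ∉ J →
      0 ≤ (∑ j : J, -|(∑ l : J, M i l.1 * ((subM M J)⁻¹ l j)) * ubar j.1|)
          - ubar i
          - (∑ j : J, M i j.1 * ((subM M J)⁻¹.mulVec (subV qbar J)) j)
          + qbar i) :
    ∃ (D : Matrix (Fin n) (Fin n) ℝ) (r : Fin n → ℝ),
      (∀ i : Fin n, (i : ℕ) < h → ∀ j, D i j = 0) ∧ IsAAR M qbar ubar D r := by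
  set B := (subM M J)⁻¹
  refine ⟨-extendByZeroMatrix J B, -extendByZero J (B *ᵥ subV qbar J), fun i hi j => ?_,
    fun u hu => ?_⟩
  · have hiJ : i ∉ J := fun hJ => (hJh i hJ).not_gt hi
    simp [extendByZeroMatrix, hiJ]
  have hu' : ∀ j : J, |subV u J j| ≤ ubar j := fun j => hu.abs_le j
  rw [← extendByZero_neg_mulVec_subV_add]
  refine isLCPSol_extendByZero_of_basis hinv (fun j => ?_) (fun i hi => ?_)
  · have hBu : B j ⬝ᵥ subV u J ≤ ∑ k, |B j k * ubar k| := dotProduct_le_sum_abs_mul _ hu'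
    have hAj := hA j
    rw [Finset.sum_neg_distrib] at hAj
    rw [subV_add, mulVec_add]
    change 0 ≤ -((B *ᵥ subV qbar J) j + B j ⬝ᵥ subV u J)
    linarith
  · have hMBu : (subV (M i) J ᵥ* B) ⬝ᵥ subV u J ≤ ∑ k, |(∑ l : J, M i l * B l k) * ubar k| :=
      dotProduct_le_sum_abs_mul _ hu'
    have hCi := hC i hi
    rw [Finset.sum_neg_distrib] at hCi
    rw [subV_add, mulVec_add, dotProduct_add, dotProduct_mulVec _ _ (subV u J)]
    change 0 ≤ qbar i + u i - (∑ j : J, M i j * (B *ᵥ subV qbar J) j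
      + (subV (M i) J ᵥ* B) ⬝ᵥ subV u J)
    linarith [(hu i).1]

/-- sufficient condition for the existence of an AAR solution
in the case `S = ∅`. -/
theorem stmt_8 (n h : ℕ) (M : Matrix (Fin n) (Fin n) ℝ) (qbar ubar : Fin n → ℝ)
    (hubar : ∀ i, 0 < ubar i)
    (J : Finset (Fin n)) (hJh : ∀ i ∈ J, h ≤ (i : ℕ))
    (hinv : IsUnit (subM M J).det)
    (hA : ∀ i : J,
      0 ≤ (∑ j : J, -|((subM M J)⁻¹ i j) * ubar j.1|)
          - ((subM M J)⁻¹.mulVec (subV qbar J)) i)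
    (hC : ∀ i : Fin n, i ∉ J →
      0 ≤ (∑ j : J, -|(∑ l : J, M i l.1 * ((subM M J)⁻¹ l j)) * ubar j.1|)
          - ubar i
          - (∑ j : J, M i j.1 * ((subM M J)⁻¹.mulVec (subV qbar J)) j)
          + qbar i) :
    ∃ (D : Matrix (Fin n) (Fin n) ℝ) (r : Fin n → ℝ),
      (∀ i : Fin n, (i : ℕ) < h → ∀ j, D i j = 0) ∧ IsAAR M qbar ubar D r :=
  stmt_8_general n h M qbar ubar J hJh hinv hA hC
end
end

section
/- For the 2×2 uncertain LCP with M = [[4,10],[1,2]], q̄ = (-100,-22)ᵀ, box uncertainty 𝒰 = [-1,1]², and h = 0, both z¹(u) = D¹u + r¹ with D¹ = [[-1/4,0],[0,0]], r¹ = (25,0)ᵀ and z²(u) = D²u + r² with D² = [[0,0],[0,-1/2]], r² = (0,11)ᵀ are AAR solutions; in particular, AAR solutions need not be unique. -/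
open Matrix BigOperators
open scoped Classical

noncomputable section

/-- the 2×2 uncertain LCP with `M = [[4,10],[1,2]]`,
`q̄ = (-100,-22)ᵀ`, and `𝒰 = [-1,1]²` has (at least) two distinct AAR
solutions; in particular, AAR solutions need not be unique. -/
theorem stmt_9 :
    IsAAR (n := 2) !![(4 : ℝ), 10; 1, 2] ![-100, -22] ![1, 1]
        !![(-(1/4) : ℝ), 0; 0, 0] ![25, 0] ∧
    IsAAR (n := 2) !![(4 : ℝ), 10; 1, 2] ![-100, -22] ![1, 1]
        !![(0 : ℝ), 0; 0, -(1/2)] ![0, 11] ∧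
    (![(25 : ℝ), 0] ≠ ![0, 11]) := by
  have hne : (![(25 : ℝ), 0] ≠ ![0, 11]) := by
    intro h
    have := congrFun h 0
    norm_num at this
  refine ⟨?_, ?_, hne⟩ <;>
  · intro u hu
    obtain ⟨h0l, h0r⟩ := hu 0
    obtain ⟨h1l, h1r⟩ := hu 1
    simp only [Matrix.cons_val_zero, Matrix.cons_val_one, Matrix.head_cons] at h0l h0r h1l h1r
    refine ⟨?_, ?_, ?_⟩
    · intro i
      fin_cases i <;>
        simp [Matrix.mulVec, dotProduct, Fin.sum_univ_two, Matrix.vecHead, Matrix.vecTail] <;> nlinarith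
    · intro i
      fin_cases i <;>
        simp [Matrix.mulVec, dotProduct, Fin.sum_univ_two, Matrix.vecHead, Matrix.vecTail] <;> nlinarith
    · simp [Matrix.mulVec, dotProduct, Fin.sum_univ_two, Matrix.vecHead, Matrix.vecTail]
      exact Or.inr (by ring)
end
end

section
/- Let M ∈ ℝ^{n×n} be positive semidefinite and q ∈ ℝ^n. If z¹ and z² are both solutions of LCP(q, M), then (z¹)ᵀ(q + M z²) = 0 and (z²)ᵀ(q + M z¹) = 0. -/
open Matrix BigOperators
open scoped Classical

noncomputable section

/-- for positive semidefinite `M`, any two solutions `z¹, z²`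
of `LCP(q,M)` satisfy `(z¹)ᵀ(q + Mz²) = 0` and `(z²)ᵀ(q + Mz¹) = 0`. -/
theorem stmt_10 (n : ℕ) (M : Matrix (Fin n) (Fin n) ℝ) (q : Fin n → ℝ)
    (hpsd : ∀ x : Fin n → ℝ, 0 ≤ ∑ i, x i * (M.mulVec x) i)
    (z1 z2 : Fin n → ℝ)
    (h1 : IsLCPSol M q z1) (h2 : IsLCPSol M q z2) :
    ∑ i, z1 i * (M.mulVec z2 + q) i = 0 ∧
    ∑ i, z2 i * (M.mulVec z1 + q) i = 0 := by
  obtain ⟨hz1, hw1, hc1⟩ := h1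
  obtain ⟨hz2, hw2, hc2⟩ := h2
  have ha : 0 ≤ ∑ i, z1 i * (M.mulVec z2 + q) i :=
    Finset.sum_nonneg fun i _ => mul_nonneg (hz1 i) (hw2 i)
  have hb : 0 ≤ ∑ i, z2 i * (M.mulVec z1 + q) i :=
    Finset.sum_nonneg fun i _ => mul_nonneg (hz2 i) (hw1 i)
  have hpsd' := hpsd (z1 - z2)
  have hmv : M.mulVec (z1 - z2) = M.mulVec z1 - M.mulVec z2 := by
    simp [Matrix.mulVec_sub]
  have key : (∑ i, z1 i * (M.mulVec z2 + q) i) + ∑ i, z2 i * (M.mulVec z1 + q) i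
      = (∑ i, z1 i * (M.mulVec z1 + q) i) + (∑ i, z2 i * (M.mulVec z2 + q) i)
        - ∑ i, (z1 - z2) i * (M.mulVec (z1 - z2)) i := by
    rw [hmv]
    simp only [Pi.add_apply, Pi.sub_apply]
    rw [← Finset.sum_add_distrib, ← Finset.sum_add_distrib, ← Finset.sum_sub_distrib]
    apply Finset.sum_congr rfl
    intro i _
    ring
  have hsum : (∑ i, z1 i * (M.mulVec z2 + q) i) + ∑ i, z2 i * (M.mulVec z1 + q) i ≤ 0 := by
    rw [key, hc1, hc2]; linarith
  constructor <;> linarith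
end
end

section
/- Let M ∈ ℝ^{n×n} be positive semidefinite and suppose LCP(q, M) has a solution z̄. Then the solution set SOL(q, M) equals the polyhedron {z ≥ 0 : q + M z ≥ 0, qᵀ(z - z̄) = 0, (M + Mᵀ)(z - z̄) = 0}. -/
open Matrix BigOperators
open scoped Classical

noncomputable section

lemma tdot {n : ℕ} (M : Matrix (Fin n) (Fin n) ℝ) (a b : Fin n → ℝ) :
    a ⬝ᵥ (Mᵀ *ᵥ b) = b ⬝ᵥ (M *ᵥ a) := by
  simp only [dotProduct, mulVec, transpose_apply, Finset.mul_sum]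
  rw [Finset.sum_comm]
  exact Finset.sum_congr rfl fun i _ => Finset.sum_congr rfl fun j _ => by ring

lemma psd_kernel {n : ℕ} (M : Matrix (Fin n) (Fin n) ℝ)
    (hpsd : ∀ x : Fin n → ℝ, 0 ≤ x ⬝ᵥ (M *ᵥ x)) (x : Fin n → ℝ)
    (hx : x ⬝ᵥ (M *ᵥ x) = 0) : (M + Mᵀ) *ᵥ x = 0 := by
  funext j
  set y : Fin n → ℝ := Pi.single j 1 with hy
  have h1 : y ⬝ᵥ (M *ᵥ x) = (M *ᵥ x) j := by simp [hy]
  have h2 : x ⬝ᵥ (M *ᵥ y) = (Mᵀ *ᵥ x) j := by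
    have := tdot Mᵀ x y
    rw [transpose_transpose] at this
    rw [this]; simp [hy]
  have key : ∀ t : ℝ, 0 ≤ (y ⬝ᵥ (M *ᵥ y)) * (t * t) + (((M + Mᵀ) *ᵥ x) j) * t + 0 := by
    intro t
    have h := hpsd (x + t • y)
    simp only [mulVec_add, mulVec_smul, dotProduct_add, add_dotProduct,
      dotProduct_smul, smul_dotProduct, smul_eq_mul, hx] at h
    have hj : ((M + Mᵀ) *ᵥ x) j = (M *ᵥ x) j + (Mᵀ *ᵥ x) j := by
      simp [add_mulVec]
    rw [hj, ← h1, ← h2]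
    nlinarith [h]
  have hd := discrim_le_zero key
  have hy2 : 0 ≤ y ⬝ᵥ (M *ᵥ y) := hpsd y
  rw [discrim] at hd
  have : (((M + Mᵀ) *ᵥ x) j) ^ 2 ≤ 0 := by nlinarith
  have : ((M + Mᵀ) *ᵥ x) j = 0 := by nlinarith
  simpa using this


/-- for positive semidefinite `M` and a solution `z̄` of
`LCP(q,M)`, the solution set equals the polyhedron
`{z ≥ 0 : q + Mz ≥ 0, qᵀ(z - z̄) = 0, (M + Mᵀ)(z - z̄) = 0}`. -/
theorem stmt_11 (n : ℕ) (M : Matrix (Fin n) (Fin n) ℝ) (q : Fin n → ℝ)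
    (hpsd : ∀ x : Fin n → ℝ, 0 ≤ ∑ i, x i * (M.mulVec x) i)
    (zbar : Fin n → ℝ) (hzbar : IsLCPSol M q zbar) :
    {z : Fin n → ℝ | IsLCPSol M q z} =
      {z : Fin n → ℝ |
        (∀ i, 0 ≤ z i) ∧ (∀ i, 0 ≤ (M.mulVec z + q) i) ∧
        (∑ i, q i * (z i - zbar i)) = 0 ∧
        (M + Mᵀ).mulVec (z - zbar) = 0} := by
  have hpsd' : ∀ x : Fin n → ℝ, 0 ≤ x ⬝ᵥ (M *ᵥ x) := hpsd
  obtain ⟨hz', hw', hzw'⟩ := hzbar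
  have hzw'' : zbar ⬝ᵥ (M *ᵥ zbar) + zbar ⬝ᵥ q = 0 := by
    rw [← dotProduct_add]; exact hzw'
  ext z
  simp only [Set.mem_setOf_eq, IsLCPSol]
  constructor
  · rintro ⟨hz, hw, hzw⟩
    refine ⟨hz, hw, ?_, ?_⟩ <;>
    · have hA : z ⬝ᵥ (M *ᵥ z) + z ⬝ᵥ q = 0 := by rw [← dotProduct_add]; exact hzw
      have cross1 : 0 ≤ z ⬝ᵥ (M *ᵥ zbar) + z ⬝ᵥ q := by
        rw [← dotProduct_add]
        exact Finset.sum_nonneg fun i _ => mul_nonneg (hz i) (hw' i)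
      have cross2 : 0 ≤ zbar ⬝ᵥ (M *ᵥ z) + zbar ⬝ᵥ q := by
        rw [← dotProduct_add]
        exact Finset.sum_nonneg fun i _ => mul_nonneg (hz' i) (hw i)
      have hexp : (z - zbar) ⬝ᵥ (M *ᵥ (z - zbar)) =
          z ⬝ᵥ (M *ᵥ z) - z ⬝ᵥ (M *ᵥ zbar) - zbar ⬝ᵥ (M *ᵥ z) + zbar ⬝ᵥ (M *ᵥ zbar) := by
        simp only [mulVec_sub, dotProduct_sub, sub_dotProduct]; ring
      have hp := hpsd' (z - zbar)
      rw [hexp] at hp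
      have hx0 : (z - zbar) ⬝ᵥ (M *ᵥ (z - zbar)) = 0 := by rw [hexp]; linarith
      have hker := psd_kernel M hpsd' (z - zbar) hx0
      have hdot : zbar ⬝ᵥ ((M + Mᵀ) *ᵥ (z - zbar)) = 0 := by rw [hker]; simp
      have hdot' : zbar ⬝ᵥ (M *ᵥ z) - zbar ⬝ᵥ (M *ᵥ zbar)
          + (z ⬝ᵥ (M *ᵥ zbar) - zbar ⬝ᵥ (M *ᵥ zbar)) = 0 := by
        have h1 : zbar ⬝ᵥ (Mᵀ *ᵥ z) = z ⬝ᵥ (M *ᵥ zbar) := tdot M zbar z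
        have h2 : zbar ⬝ᵥ (Mᵀ *ᵥ zbar) = zbar ⬝ᵥ (M *ᵥ zbar) := tdot M zbar zbar
        have hdot2 := hdot
        simp only [add_mulVec, mulVec_sub, dotProduct_add, dotProduct_sub] at hdot2
        rw [← h1, ← h2]; linarith
      first
      | · show q ⬝ᵥ (z - zbar) = 0
          rw [dotProduct_sub, dotProduct_comm q z, dotProduct_comm q zbar]
          linarith
      | exact hker
  · rintro ⟨hz, hw, hq, hM⟩
    refine ⟨hz, hw, ?_⟩
    have hq' : z ⬝ᵥ q - zbar ⬝ᵥ q = 0 := by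
      have : q ⬝ᵥ (z - zbar) = 0 := hq
      rw [dotProduct_sub, dotProduct_comm q z, dotProduct_comm q zbar] at this
      linarith
    have hd1 : zbar ⬝ᵥ ((M + Mᵀ) *ᵥ (z - zbar)) = 0 := by rw [hM]; simp
    have hd2 : (z - zbar) ⬝ᵥ ((M + Mᵀ) *ᵥ (z - zbar)) = 0 := by rw [hM]; simp
    have e1 : zbar ⬝ᵥ (M *ᵥ z) - zbar ⬝ᵥ (M *ᵥ zbar)
        + (z ⬝ᵥ (M *ᵥ zbar) - zbar ⬝ᵥ (M *ᵥ zbar)) = 0 := by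
      have h1 : zbar ⬝ᵥ (Mᵀ *ᵥ z) = z ⬝ᵥ (M *ᵥ zbar) := tdot M zbar z
      have h2 : zbar ⬝ᵥ (Mᵀ *ᵥ zbar) = zbar ⬝ᵥ (M *ᵥ zbar) := tdot M zbar zbar
      have hd1' := hd1
      simp only [add_mulVec, mulVec_sub, dotProduct_add, dotProduct_sub] at hd1'
      rw [← h1, ← h2]; linarith
    have e2 : (z - zbar) ⬝ᵥ (M *ᵥ (z - zbar)) = 0 := by
      have h1 : (z - zbar) ⬝ᵥ (Mᵀ *ᵥ (z - zbar)) = (z - zbar) ⬝ᵥ (M *ᵥ (z - zbar)) :=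
        tdot M (z - zbar) (z - zbar)
      simp only [add_mulVec, dotProduct_add, h1] at hd2
      linarith
    have hexp : (z - zbar) ⬝ᵥ (M *ᵥ (z - zbar)) =
        z ⬝ᵥ (M *ᵥ z) - z ⬝ᵥ (M *ᵥ zbar) - zbar ⬝ᵥ (M *ᵥ z) + zbar ⬝ᵥ (M *ᵥ zbar) := by
      simp only [mulVec_sub, dotProduct_sub, sub_dotProduct]; ring
    rw [hexp] at e2
    show z ⬝ᵥ (M *ᵥ z + q) = 0
    rw [dotProduct_add]
    linarith
end
end

section
/- Let M be positive semidefinite and define P = {j : there exists z ∈ SOL(q̄, M) with z_j > 0}, L = [n]∖P, and index sets U = {i : ū_i > 0}, S = {i : ū_i = 0}. If z(u) = Du + r is an AAR solution of the uncertain LCP (with D_{·,S} = 0 and D_{i,·} = 0 whenever r_i = 0), then: M_{P∩S,P} D_{P,U} = 0, M_{P∩U,P} D_{P,P∩U} = -I_{P∩U}, and M_{P∩U,P} D_{P,L∩U} = 0. -/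
open Matrix BigOperators
open scoped Classical

noncomputable section

/-- Cross complementarity for PSD LCPs: if `z` and `r` both solve the LCP,
then `z_i (M r + q)_i = 0` for all `i`. -/
lemma cross_comp {n : ℕ} {M : Matrix (Fin n) (Fin n) ℝ} {qbar : Fin n → ℝ}
    (hpsd : ∀ x : Fin n → ℝ, 0 ≤ ∑ i, x i * (M.mulVec x) i)
    {z r : Fin n → ℝ} (hz : IsLCPSol M qbar z) (hr : IsLCPSol M qbar r) :
    ∀ i, z i * (M.mulVec r + qbar) i = 0 := by
  obtain ⟨hz1, hz2, hz3⟩ := hz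
  obtain ⟨hr1, hr2, hr3⟩ := hr
  have hA : (0:ℝ) ≤ ∑ i, z i * (M.mulVec r + qbar) i :=
    Finset.sum_nonneg fun i _ => mul_nonneg (hz1 i) (hr2 i)
  have hB : (0:ℝ) ≤ ∑ i, r i * (M.mulVec z + qbar) i :=
    Finset.sum_nonneg fun i _ => mul_nonneg (hr1 i) (hz2 i)
  have h := hpsd (z - r)
  rw [Matrix.mulVec_sub] at h
  have hexp : ∑ i, (z - r) i * (M.mulVec z - M.mulVec r) i
      = (∑ i, z i * M.mulVec z i) - (∑ i, z i * M.mulVec r i)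
        - (∑ i, r i * M.mulVec z i) + (∑ i, r i * M.mulVec r i) := by
    simp only [Pi.sub_apply, sub_mul, mul_sub, Finset.sum_sub_distrib]
    ring
  rw [hexp] at h
  simp only [Pi.add_apply, mul_add, Finset.sum_add_distrib] at hz3 hr3 hA hB ⊢
  have hterm : ∀ i ∈ Finset.univ, (0:ℝ) ≤ z i * (M.mulVec r i + qbar i) :=
    fun i _ => mul_nonneg (hz1 i) (by simpa using hr2 i)
  have := (Finset.sum_eq_zero_iff_of_nonneg hterm).mp (by
    simp only [mul_add, Finset.sum_add_distrib]; linarith)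
  intro i
  have := this i (Finset.mem_univ i)
  simpa [mul_add] using this

section
variable {n : ℕ} {M : Matrix (Fin n) (Fin n) ℝ} {qbar ubar : Fin n → ℝ}
  {D : Matrix (Fin n) (Fin n) ℝ} {r : Fin n → ℝ}

/-- The nominal part `r` of an AAR solution solves the nominal LCP. -/
lemma r_sol (hubar : ∀ i, 0 ≤ ubar i) (hAAR : IsAAR M qbar ubar D r) :
    IsLCPSol M qbar r := by
  have h := hAAR 0 (fun i => ⟨by simpa using neg_nonpos.mpr (hubar i), hubar i⟩)
  simpa [Matrix.mulVec_zero] using h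

/-- Key probing identity: for `i ∈ P` and `j ∈ U`,
`(M D)_{ij} + δ_{ij} = 0`. -/
lemma key (hubar : ∀ i, 0 ≤ ubar i)
    (hpsd : ∀ x : Fin n → ℝ, 0 ≤ ∑ i, x i * (M.mulVec x) i)
    (hAAR : IsAAR M qbar ubar D r)
    (i : Fin n) (hiP : ∃ z, IsLCPSol M qbar z ∧ 0 < z i)
    (j : Fin n) (hj : 0 < ubar j) :
    (∑ l, M i l * D l j) + (if i = j then (1:ℝ) else 0) = 0 := by
  have hr := r_sol hubar hAAR
  obtain ⟨z, hz, hzi⟩ := hiP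
  have hw0 : (M.mulVec r + qbar) i = 0 := by
    have := cross_comp hpsd hz hr i
    rcases mul_eq_zero.mp this with h | h
    · exact absurd h (ne_of_gt hzi)
    · exact h
  have probe : ∀ t : ℝ, -ubar j ≤ t → t ≤ ubar j →
      0 ≤ t * ((∑ l, M i l * D l j) + (if i = j then (1:ℝ) else 0)) := by
    intro t ht1 ht2
    set u : Fin n → ℝ := fun k => if k = j then t else 0 with hu
    have hbox : inBox ubar u := by
      intro k
      by_cases hk : k = j
      · subst hk; simp [hu, ht1, ht2]
      · simp [hu, hk, hubar k, neg_nonpos.mpr (hubar k)]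
    have h := (hAAR u hbox).2.1 i
    have hDu : D.mulVec u = fun l => t * D l j := by
      funext l
      simp [hu, Matrix.mulVec, dotProduct, Finset.sum_ite_eq', mul_comm]
    have hMDu : M.mulVec (D.mulVec u + r) i
        = t * (∑ l, M i l * D l j) + M.mulVec r i := by
      rw [Matrix.mulVec_add, hDu]
      simp [Matrix.mulVec, dotProduct, Finset.mul_sum]
      exact Finset.sum_congr rfl fun l _ => by ring
    have hui : u i = t * (if i = j then (1:ℝ) else 0) := by
      by_cases hij : i = j <;> simp [hu, hij]
    have hw0' : M.mulVec r i + qbar i = 0 := by simpa using hw0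
    have : 0 ≤ t * (∑ l, M i l * D l j) + M.mulVec r i + (qbar i
        + t * (if i = j then (1:ℝ) else 0)) := by
      have h' := h
      simp only [Pi.add_apply] at h'
      rw [hMDu] at h'
      rw [hui] at h'
      linarith
    nlinarith [this]
  have h1 := probe (ubar j) (by linarith) le_rfl
  have h2 := probe (-ubar j) le_rfl (by linarith)
  nlinarith [h1, h2]

/-- The sum over `P` equals the full sum, since `D` has zero rows outside `P`. -/
lemma filter_sum (hubar : ∀ i, 0 ≤ ubar i) (hDr : ∀ i, r i = 0 → ∀ j, D i j = 0)
    (hAAR : IsAAR M qbar ubar D r) (i j : Fin n) :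
    ∑ l ∈ Finset.univ.filter (fun l : Fin n => ∃ z, IsLCPSol M qbar z ∧ 0 < z l),
      M i l * D l j = ∑ l, M i l * D l j := by
  have hr := r_sol hubar hAAR
  refine Finset.sum_subset (Finset.filter_subset _ _) ?_
  intro l _ hl
  simp only [Finset.mem_filter, Finset.mem_univ, true_and] at hl
  have hrl : r l = 0 := by
    rcases lt_or_eq_of_le (hr.1 l) with h | h
    · exact absurd ⟨r, hr, h⟩ hl
    · exact h.symm
  rw [hDr l hrl j, mul_zero]

end

/-- necessary conditions on `D` for AAR solutions with
positive semidefinite `M`, where `P = {j : ∃ z ∈ SOL(q̄,M), z_j > 0}`,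
`L = [n]∖P`, `U = {i : ū_i > 0}`, `S = {i : ū_i = 0}`. -/
theorem stmt_12 (n : ℕ) (M : Matrix (Fin n) (Fin n) ℝ) (qbar ubar : Fin n → ℝ)
    (hubar : ∀ i, 0 ≤ ubar i)
    (hpsd : ∀ x : Fin n → ℝ, 0 ≤ ∑ i, x i * (M.mulVec x) i)
    (D : Matrix (Fin n) (Fin n) ℝ) (r : Fin n → ℝ)
    (hDS : ∀ i j, ubar j = 0 → D i j = 0)
    (hDr : ∀ i, r i = 0 → ∀ j, D i j = 0)
    (hAAR : IsAAR M qbar ubar D r) :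
    -- `M_{P∩S,P} D_{P,U} = 0`
    (∀ i : Fin n, (∃ z, IsLCPSol M qbar z ∧ 0 < z i) → ubar i = 0 →
        ∀ j, 0 < ubar j →
          ∑ l ∈ Finset.univ.filter (fun l : Fin n => ∃ z, IsLCPSol M qbar z ∧ 0 < z l),
            M i l * D l j = 0) ∧
    -- `M_{P∩U,P} D_{P,P∩U} = -I_{P∩U}`
    (∀ i : Fin n, (∃ z, IsLCPSol M qbar z ∧ 0 < z i) → 0 < ubar i →
        ∀ j : Fin n, (∃ z, IsLCPSol M qbar z ∧ 0 < z j) → 0 < ubar j →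
          ∑ l ∈ Finset.univ.filter (fun l : Fin n => ∃ z, IsLCPSol M qbar z ∧ 0 < z l),
            M i l * D l j = -(if i = j then (1 : ℝ) else 0)) ∧
    -- `M_{P∩U,P} D_{P,L∩U} = 0`
    (∀ i : Fin n, (∃ z, IsLCPSol M qbar z ∧ 0 < z i) → 0 < ubar i →
        ∀ j : Fin n, ¬(∃ z, IsLCPSol M qbar z ∧ 0 < z j) → 0 < ubar j →
          ∑ l ∈ Finset.univ.filter (fun l : Fin n => ∃ z, IsLCPSol M qbar z ∧ 0 < z l),
            M i l * D l j = 0) := by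
  refine ⟨?_, ?_, ?_⟩
  · intro i hiP hiS j hj
    rw [filter_sum hubar hDr hAAR]
    have hk := key hubar hpsd hAAR i hiP j hj
    have hij : i ≠ j := fun h => by rw [h] at hiS; exact absurd hiS (ne_of_gt hj)
    rw [if_neg hij] at hk
    linarith
  · intro i hiP _ j _ hj
    rw [filter_sum hubar hDr hAAR]
    have hk := key hubar hpsd hAAR i hiP j hj
    linarith
  · intro i hiP _ j hjL hj
    rw [filter_sum hubar hDr hAAR]
    have hk := key hubar hpsd hAAR i hiP j hj
    have hij : i ≠ j := fun h => hjL (h ▸ hiP)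
    rw [if_neg hij] at hk
    linarith
end
end

section
/- Let M be positive semidefinite, S ⊆ [h] (all certain entries are non-adjustable), and let z(u) = Du + r be an AAR solution of the uncertain LCP. Then D is uniquely determined: D_{P∩U} = -(M_{P∩U})^{-1} (in particular M_{P∩U} is invertible) and D_{i,j} = 0 whenever (i,j) ∉ (P∩U)×(P∩U), where P = {j : ∃ z ∈ SOL(q̄,M), z_j > 0} and U = {i : ū_i > 0}. -/
open Matrix BigOperators
open scoped Classical

noncomputable section

/-- Membership of an index in `P ∩ U`. -/
def PUmem {n : ℕ} (M : Matrix (Fin n) (Fin n) ℝ) (qbar ubar : Fin n → ℝ)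
    (i : Fin n) : Prop :=
  (∃ z, IsLCPSol M qbar z ∧ 0 < z i) ∧ 0 < ubar i

/-- for positive semidefinite `M` and `S ⊆ [h]`, the matrix `D`
of any AAR solution is uniquely determined: `D_{P∩U} = -(M_{P∩U})⁻¹` and all
other entries of `D` vanish. -/
theorem stmt_13 (n h : ℕ) (M : Matrix (Fin n) (Fin n) ℝ) (qbar ubar : Fin n → ℝ)
    (hubar : ∀ i, 0 ≤ ubar i)
    (hpsd : ∀ x : Fin n → ℝ, 0 ≤ ∑ i, x i * (M.mulVec x) i)
    (hS : ∀ i : Fin n, ubar i = 0 → (i : ℕ) < h)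
    (D : Matrix (Fin n) (Fin n) ℝ) (r : Fin n → ℝ)
    (hDh : ∀ i : Fin n, (i : ℕ) < h → ∀ j, D i j = 0)
    (hDS : ∀ i j, ubar j = 0 → D i j = 0)
    (hAAR : IsAAR M qbar ubar D r) :
    IsUnit (Matrix.of fun i j : {l : Fin n // PUmem M qbar ubar l} =>
        M i.1 j.1).det ∧
    (∀ i j : {l : Fin n // PUmem M qbar ubar l},
        D i.1 j.1 =
          -(((Matrix.of fun i j : {l : Fin n // PUmem M qbar ubar l} =>
              M i.1 j.1))⁻¹ i j)) ∧
    (∀ i j : Fin n, ¬(PUmem M qbar ubar i ∧ PUmem M qbar ubar j) →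
        D i j = 0) := by
  classical
  -- the coordinate directions lie in the box
  have hbox : ∀ (j : Fin n) (t : ℝ), |t| ≤ ubar j →
      inBox ubar (fun k => if k = j then t else 0) := by
    intro j t ht i
    by_cases hij : i = j
    · subst hij
      simp only [if_pos rfl]
      exact ⟨neg_le_of_abs_le ht, le_of_abs_le ht⟩
    · simp only [if_neg hij]
      exact ⟨neg_nonpos.mpr (hubar i), hubar i⟩
  have h0 : inBox ubar 0 := fun i => ⟨neg_nonpos.mpr (hubar i), hubar i⟩
  -- the nominal vector r is a solution
  have hr : IsLCPSol M qbar r := by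
    have := hAAR 0 h0
    simpa using this
  -- componentwise complementarity
  have comp : ∀ (q z : Fin n → ℝ), IsLCPSol M q z →
      ∀ i, z i * (M.mulVec z + q) i = 0 := by
    intro q z hz i
    obtain ⟨h1, h2, h3⟩ := hz
    have hnn : ∀ j ∈ Finset.univ, 0 ≤ z j * (M.mulVec z + q) j :=
      fun j _ => mul_nonneg (h1 j) (h2 j)
    exact (Finset.sum_eq_zero_iff_of_nonneg hnn).mp h3 i (Finset.mem_univ i)
  -- cross complementarity for the PSD matrix M
  have cross : ∀ z, IsLCPSol M qbar z →
      ∀ i, z i * (M.mulVec r + qbar) i = 0 := by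
    intro z hz
    obtain ⟨hz1, hz2, hz3⟩ := hz
    obtain ⟨hr1, hr2, hr3⟩ := hr
    have e1 : ∑ i, (z - r) i * (M.mulVec (z - r)) i =
        (∑ i, z i * (M.mulVec z + qbar) i) + (∑ i, r i * (M.mulVec r + qbar) i)
          - (∑ i, z i * (M.mulVec r + qbar) i)
          - (∑ i, r i * (M.mulVec z + qbar) i) := by
      rw [← Finset.sum_add_distrib, ← Finset.sum_sub_distrib, ← Finset.sum_sub_distrib]
      refine Finset.sum_congr rfl fun i _ => ?_
      have hmv : M.mulVec (z - r) = M.mulVec z - M.mulVec r := by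
        simp [Matrix.mulVec_sub]
      rw [hmv]
      simp only [Pi.sub_apply, Pi.add_apply]
      ring
    have hps := hpsd (z - r)
    rw [e1, hz3, hr3] at hps
    have ha : 0 ≤ ∑ i, z i * (M.mulVec r + qbar) i :=
      Finset.sum_nonneg fun i _ => mul_nonneg (hz1 i) (hr2 i)
    have hb : 0 ≤ ∑ i, r i * (M.mulVec z + qbar) i :=
      Finset.sum_nonneg fun i _ => mul_nonneg (hr1 i) (hz2 i)
    have ha0 : ∑ i, z i * (M.mulVec r + qbar) i = 0 := by linarith
    intro i
    have hnn : ∀ j ∈ Finset.univ, 0 ≤ z j * (M.mulVec r + qbar) j :=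
      fun j _ => mul_nonneg (hz1 j) (hr2 j)
    exact (Finset.sum_eq_zero_iff_of_nonneg hnn).mp ha0 i (Finset.mem_univ i)
  -- mulVec against a coordinate vector
  have hmv_single : ∀ (A : Matrix (Fin n) (Fin n) ℝ) (j : Fin n) (t : ℝ) (i : Fin n),
      A.mulVec (fun k => if k = j then t else 0) i = A i j * t := by
    intro A j t i
    simp [Matrix.mulVec, dotProduct, mul_ite, mul_zero, Finset.sum_ite_eq']
  -- evaluation of z(u) and w(u) at u = t e_j
  have zeval : ∀ (j : Fin n) (t : ℝ) (i : Fin n),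
      (D.mulVec (fun k => if k = j then t else 0) + r) i = D i j * t + r i := by
    intro j t i
    simp [hmv_single]
  have weval : ∀ (j : Fin n) (t : ℝ) (i : Fin n),
      (M.mulVec (D.mulVec (fun k => if k = j then t else 0) + r)
        + (qbar + (fun k => if k = j then t else 0))) i
      = (M * D) i j * t + (M.mulVec r + qbar) i + (if i = j then t else 0) := by
    intro j t i
    have h1 : M.mulVec (D.mulVec (fun k => if k = j then t else 0) + r)
        = (M * D).mulVec (fun k => if k = j then t else 0) + M.mulVec r := by
      rw [Matrix.mulVec_add, Matrix.mulVec_mulVec]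
    rw [h1]
    simp only [Pi.add_apply, hmv_single]
    ring
  -- Fact: if some nominal solution is positive at i, then the linear row identity holds
  have F2 : ∀ i : Fin n, (∃ z, IsLCPSol M qbar z ∧ 0 < z i) →
      ∀ j : Fin n, 0 < ubar j →
      (M * D) i j + (if i = j then 1 else 0) = 0 := by
    intro i hPpi j huj
    obtain ⟨z, hz, hzi⟩ := hPpi
    have hw0 : (M.mulVec r + qbar) i = 0 := by
      have hcz := cross z hz i
      rcases mul_eq_zero.mp hcz with h' | h'
      · exact absurd h' (ne_of_gt hzi)
      · exact h'
    have habs1 : |ubar j| ≤ ubar j := le_of_eq (abs_of_nonneg (hubar j))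
    have habs2 : |(-(ubar j))| ≤ ubar j := by
      rw [abs_neg]; exact habs1
    have hA1 := (hAAR _ (hbox j (ubar j) habs1)).2.1 i
    have hA2 := (hAAR _ (hbox j (-(ubar j)) habs2)).2.1 i
    rw [weval j (ubar j) i] at hA1
    rw [weval j (-(ubar j)) i] at hA2
    rw [hw0] at hA1 hA2
    set c := (M * D) i j + (if i = j then 1 else 0) with hc
    have hcu : c * ubar j = 0 := by
      by_cases hij : i = j
      · simp only [if_pos hij] at hA1 hA2 hc
        nlinarith
      · simp only [if_neg hij] at hA1 hA2 hc
        nlinarith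
    exact (mul_eq_zero.mp hcu).resolve_right (ne_of_gt huj)
  -- rows of D with a nonzero entry are in P ∩ U
  have hrowpos : ∀ i j : Fin n, D i j ≠ 0 → 0 < r i := by
    intro i j hD
    have huj : 0 < ubar j := by
      rcases (hubar j).lt_or_eq with h' | h'
      · exact h'
      · exact absurd (hDS i j h'.symm) hD
    have habs1 : |ubar j| ≤ ubar j := le_of_eq (abs_of_nonneg (hubar j))
    have habs2 : |(-(ubar j))| ≤ ubar j := by rw [abs_neg]; exact habs1
    have hA1 := (hAAR _ (hbox j (ubar j) habs1)).1 i
    have hA2 := (hAAR _ (hbox j (-(ubar j)) habs2)).1 i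
    rw [zeval j (ubar j) i] at hA1
    rw [zeval j (-(ubar j)) i] at hA2
    have habs : |D i j * ubar j| ≤ r i := by
      apply abs_le.mpr
      constructor <;> nlinarith
    have hne : D i j * ubar j ≠ 0 := mul_ne_zero hD (ne_of_gt huj)
    exact lt_of_lt_of_le (abs_pos.mpr hne) habs
  have hCP : ∀ i : Fin n, (∃ j, D i j ≠ 0) → PUmem M qbar ubar i := by
    intro i ⟨j, hD⟩
    constructor
    · exact ⟨r, hr, hrowpos i j hD⟩
    · have hne : ubar i ≠ 0 := fun h0 => hD (hDh i (hS i h0) j)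
      exact lt_of_le_of_ne (hubar i) (Ne.symm hne)
  have rowzero : ∀ i : Fin n, ¬ PUmem M qbar ubar i → ∀ j, D i j = 0 := by
    intro i hi j
    by_contra hD
    exact hi (hCP i ⟨j, hD⟩)
  -- restrict sums to the subtype
  have hsum : ∀ (i j : Fin n),
      ∑ k : {l : Fin n // PUmem M qbar ubar l}, M i k.1 * D k.1 j
        = (M * D) i j := by
    intro i j
    rw [Matrix.mul_apply]
    rw [← Finset.sum_subtype (Finset.univ.filter (PUmem M qbar ubar))
      (by simp) (fun k => M i k * D k j)]
    apply Finset.sum_subset (Finset.subset_univ _)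
    intro k _ hk
    have hk' : ¬ PUmem M qbar ubar k := by simpa using hk
    rw [rowzero k hk' j, mul_zero]
  -- the matrix identity A * (-B) = 1
  have hAB : (Matrix.of fun i j : {l : Fin n // PUmem M qbar ubar l} => M i.1 j.1) *
      (Matrix.of fun i j : {l : Fin n // PUmem M qbar ubar l} => -(D i.1 j.1)) = 1 := by
    ext i j
    simp only [Matrix.mul_apply, Matrix.of_apply, Matrix.one_apply]
    have h2 := F2 i.1 i.2.1 j.1 j.2.2
    have hs := hsum i.1 j.1
    have : ∑ k : {l : Fin n // PUmem M qbar ubar l}, M i.1 k.1 * -(D k.1 j.1)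
        = -((M * D) i.1 j.1) := by
      rw [← hs, ← Finset.sum_neg_distrib]
      exact Finset.sum_congr rfl fun k _ => by ring
    rw [this]
    have hij : (i = j) ↔ (i.1 = j.1) := Subtype.ext_iff
    by_cases hij' : i.1 = j.1
    · simp only [if_pos hij', if_pos (hij.mpr hij')] at h2 ⊢
      linarith
    · simp only [if_neg hij', if_neg (fun hh => hij' (hij.mp hh))] at h2 ⊢
      linarith
  have hdet : IsUnit (Matrix.of fun i j : {l : Fin n // PUmem M qbar ubar l} =>
      M i.1 j.1).det := Matrix.isUnit_det_of_right_inverse hAB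
  refine ⟨hdet, ?_, ?_⟩
  · have hinv := Matrix.inv_eq_right_inv hAB
    intro i j
    rw [hinv]
    simp
  · intro i j hij
    by_cases hPi : PUmem M qbar ubar i
    · have hPj : ¬ PUmem M qbar ubar j := fun hj => hij ⟨hPi, hj⟩
      by_cases huj : ubar j = 0
      · exact hDS i j huj
      · have hujpos : 0 < ubar j := lt_of_le_of_ne (hubar j) (Ne.symm huj)
        -- build the vector of column entries and show it is killed by A
        set A : Matrix {l : Fin n // PUmem M qbar ubar l}
            {l : Fin n // PUmem M qbar ubar l} ℝ :=
          Matrix.of fun i' j' : {l : Fin n // PUmem M qbar ubar l} => M i'.1 j'.1 with hAdef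
        set v : {l : Fin n // PUmem M qbar ubar l} → ℝ := fun k => D k.1 j with hvdef
        have hAv : A.mulVec v = 0 := by
          funext k
          have hkj : k.1 ≠ j := fun hh => hPj (hh ▸ k.2)
          have h2 := F2 k.1 k.2.1 j hujpos
          rw [if_neg hkj, add_zero] at h2
          have : A.mulVec v k = (M * D) k.1 j := by
            simp only [Matrix.mulVec, dotProduct, hAdef, hvdef, Matrix.of_apply]
            exact hsum k.1 j
          rw [this, h2]
          rfl
        have hv0 : v = 0 := by
          have h1 : A⁻¹ * A = 1 := Matrix.nonsing_inv_mul A hdet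
          calc v = (A⁻¹ * A).mulVec v := by rw [h1, Matrix.one_mulVec]
          _ = A⁻¹.mulVec (A.mulVec v) := by rw [← Matrix.mulVec_mulVec]
          _ = 0 := by rw [hAv, Matrix.mulVec_zero]
        have := congrFun hv0 ⟨i, hPi⟩
        simpa [hvdef] using this
    · exact rowzero i hPi j
end
end

section
/- Let M be positive semidefinite and ū_i > 0 for all i. If an AAR solution of the uncertain LCP exists, it is unique: any two AAR solutions z¹(u) = D¹u + r¹ and z²(u) = D²u + r² satisfy D¹ = D² and r¹ = r². -/
open Matrix BigOperators
open scoped Classical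

noncomputable section

lemma aux_zero (δ w c : ℝ) (hδ : 0 < δ)
    (h : ∀ t : ℝ, |t| ≤ δ → t ^ 2 * c ≤ t * w) : w = 0 := by
  by_contra hw
  have hw' : 0 < |w| := abs_pos.mpr hw
  set m : ℝ := min δ (|w| / (2 * (|c| + 1))) with hm
  have hc1 : 0 < |c| + 1 := by positivity
  have hm0 : 0 < m := lt_min hδ (by positivity)
  have hmδ : m ≤ δ := min_le_left _ _
  have hm2 : m * (|c| + 1) ≤ |w| / 2 := by
    have : m ≤ |w| / (2 * (|c| + 1)) := min_le_right _ _
    calc m * (|c| + 1) ≤ (|w| / (2 * (|c| + 1))) * (|c| + 1) := by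
          exact mul_le_mul_of_nonneg_right this (le_of_lt hc1)
      _ = |w| / 2 := by field_simp
  set t : ℝ := if 0 < w then -m else m with ht
  have habs : |t| ≤ δ := by
    rcases ite_eq_or_eq (0 < w) (-m) m with h' | h' <;>
      rw [ht, h'] <;> simp [abs_of_pos hm0, abs_of_neg (neg_neg_of_pos hm0), hmδ] <;>
      linarith [abs_of_pos hm0]
  have hkey := h t habs
  have htw : t * w = -(m * |w|) := by
    rcases lt_trichotomy 0 w with h' | h' | h'
    · rw [ht, if_pos h', abs_of_pos h']; ring
    · exact absurd h'.symm hw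
    · rw [ht, if_neg (by linarith), abs_of_neg h']; ring
  have ht2 : t ^ 2 = m ^ 2 := by
    rcases ite_eq_or_eq (0 < w) (-m) m with h' | h' <;> rw [ht, h'] <;> ring
  rw [htw, ht2] at hkey
  have h1 : -(m ^ 2 * |c|) ≤ m ^ 2 * c := by nlinarith [neg_abs_le c, sq_nonneg m]
  have h2 : m * |c| ≤ |w| / 2 := by nlinarith
  nlinarith [mul_pos hm0 hw']

lemma key_ineq {n : ℕ} (M : Matrix (Fin n) (Fin n) ℝ) (qbar ubar : Fin n → ℝ)
    (hpsd : ∀ x : Fin n → ℝ, 0 ≤ ∑ i, x i * (M.mulVec x) i)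
    (D1 D2 : Matrix (Fin n) (Fin n) ℝ) (r1 r2 : Fin n → ℝ)
    (h1 : IsAAR M qbar ubar D1 r1) (h2 : IsAAR M qbar ubar D2 r2)
    (u u' : Fin n → ℝ) (hu : inBox ubar u) (hu' : inBox ubar u') :
    0 ≤ ∑ i, ((D1.mulVec u + r1) i - (D2.mulVec u' + r2) i) * (u' i - u i) := by
  set z1 : Fin n → ℝ := D1.mulVec u + r1 with hz1
  set z2 : Fin n → ℝ := D2.mulVec u' + r2 with hz2
  obtain ⟨h1n, h1f, h1c₀⟩ := h1 u hu
  obtain ⟨h2n, h2f, h2c₀⟩ := h2 u' hu'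
  have h1c : ∑ i, z1 i * (M.mulVec z1 + (qbar + u)) i = 0 := h1c₀
  have h2c : ∑ i, z2 i * (M.mulVec z2 + (qbar + u')) i = 0 := h2c₀
  have hP := hpsd (z1 - z2)
  have hA : 0 ≤ ∑ i, z1 i * (M.mulVec z2 + (qbar + u')) i :=
    Finset.sum_nonneg fun i _ => mul_nonneg (h1n i) (h2f i)
  have hB : 0 ≤ ∑ i, z2 i * (M.mulVec z1 + (qbar + u)) i :=
    Finset.sum_nonneg fun i _ => mul_nonneg (h2n i) (h1f i)
  simp only [Matrix.mulVec_sub, Pi.sub_apply, sub_mul, mul_sub,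
    Finset.sum_sub_distrib] at hP
  simp only [Pi.add_apply, mul_add, Finset.sum_add_distrib] at hA hB h1c h2c
  simp only [sub_mul, mul_sub, Finset.sum_sub_distrib]
  linarith

/-- for positive semidefinite `M` and full-dimensional box
uncertainty, AAR solutions are unique. -/
theorem stmt_15 (n h : ℕ) (M : Matrix (Fin n) (Fin n) ℝ) (qbar ubar : Fin n → ℝ)
    (hubar : ∀ i, 0 < ubar i)
    (hpsd : ∀ x : Fin n → ℝ, 0 ≤ ∑ i, x i * (M.mulVec x) i)
    (D1 D2 : Matrix (Fin n) (Fin n) ℝ) (r1 r2 : Fin n → ℝ)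
    (hDh1 : ∀ i : Fin n, (i : ℕ) < h → ∀ j, D1 i j = 0)
    (hDh2 : ∀ i : Fin n, (i : ℕ) < h → ∀ j, D2 i j = 0)
    (h1 : IsAAR M qbar ubar D1 r1) (h2 : IsAAR M qbar ubar D2 r2) :
    D1 = D2 ∧ r1 = r2 := by
  -- main pointwise claim on "half" points
  have main : ∀ u₀ : Fin n → ℝ, (∀ k, |u₀ k| ≤ ubar k / 2) →
      ∀ i, (D1.mulVec u₀ + r1) i = (D2.mulVec u₀ + r2) i := by
    intro u₀ hu₀ i
    have hbox : inBox ubar u₀ := by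
      intro k
      have := hu₀ k
      have := hubar k
      constructor <;> [linarith [neg_abs_le (u₀ k)]; linarith [le_abs_self (u₀ k)]]
    have key : ∀ t : ℝ, |t| ≤ ubar i / 2 →
        t ^ 2 * (D2 i i) ≤ t * ((D1.mulVec u₀ + r1) i - (D2.mulVec u₀ + r2) i) := by
      intro t ht
      set u' : Fin n → ℝ := u₀ + (Pi.single i t : Fin n → ℝ) with hu'def
      have hu'box : inBox ubar u' := by
        intro k
        by_cases hk : k = i
        · subst hk
          have h1 := hu₀ k
          have h2 := abs_le.mp ht
          simp only [hu'def, Pi.add_apply, Pi.single_eq_same]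
          constructor <;> cases abs_le.mp (hu₀ k) <;> linarith
        · have := hbox k
          simp only [hu'def, Pi.add_apply, Pi.single_eq_of_ne hk]
          simpa using this
      have hk := key_ineq M qbar ubar hpsd D1 D2 r1 r2 h1 h2 u₀ u' hbox hu'box
      have hdiff : ∀ k, u' k - u₀ k = (Pi.single i t : Fin n → ℝ) k := by
        intro k; simp [hu'def]
      have hz2 : ∀ k, (D2.mulVec u' + r2) k
          = (D2.mulVec u₀ + r2) k + D2 k i * t := by
        intro k
        simp [hu'def, Matrix.mulVec_add, Matrix.mulVec_single]
        ring
      rw [Finset.sum_congr rfl (fun k _ => by rw [hdiff k, hz2 k])] at hk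
      rw [Finset.sum_eq_single i (fun k _ hk' => by simp [Pi.single_eq_of_ne hk'])
        (fun hk' => absurd (Finset.mem_univ i) hk')] at hk
      simp only [Pi.single_eq_same] at hk
      nlinarith [hk]
    have := aux_zero (ubar i / 2) _ (D2 i i) (by linarith [hubar i]) key
    linarith [this]
  have hr : r1 = r2 := by
    funext i
    have := main 0 (fun k => by simp; linarith [hubar k]) i
    simpa [Matrix.mulVec_zero] using this
  refine ⟨?_, hr⟩
  funext i j
  have hmem : ∀ k, |(Pi.single j (ubar j / 2) : Fin n → ℝ) k| ≤ ubar k / 2 := by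
    intro k
    by_cases hk : k = j
    · subst hk; simp [abs_of_nonneg (by linarith [hubar k] : (0:ℝ) ≤ ubar k / 2)]
    · simp [Pi.single_eq_of_ne hk]; linarith [hubar k]
  have := main (Pi.single j (ubar j / 2)) hmem i
  simp only [Pi.add_apply, Matrix.mulVec_single, hr] at this
  have h2 : D1 i j * (ubar j / 2) = D2 i j * (ubar j / 2) := by
    simpa [hr] using this
  have hne : (ubar j / 2) ≠ 0 := ne_of_gt (by linarith [hubar j])
  exact mul_right_cancel₀ hne h2
end
end

section
/- For the uncertain LCP with M = [[1, 1/2],[1/2, 1]], q̄ = (-5,-3)ᵀ, 𝒰 = [-1,1]², and h = 0: for every u ∈ 𝒰 the LCP(q̄ + u, M) has a (unique) solution, yet no AAR solution z(u) = Du + r exists; i.e., an adjustable robust solution exists while an affinely adjustable robust one does not. -/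
open Matrix BigOperators
open scoped Classical

noncomputable section

lemma lcp_expand (q z : Fin 2 → ℝ) :
    IsLCPSol !![(1 : ℝ), 1/2; 1/2, 1] q z ↔
      0 ≤ z 0 ∧ 0 ≤ z 1 ∧ 0 ≤ z 0 + z 1 / 2 + q 0 ∧ 0 ≤ z 0 / 2 + z 1 + q 1 ∧
        z 0 * (z 0 + z 1 / 2 + q 0) + z 1 * (z 0 / 2 + z 1 + q 1) = 0 := by
  have h0 : ((!![(1:ℝ),1/2;1/2,1]).mulVec z + q) 0 = z 0 + z 1 / 2 + q 0 := by
    simp [Matrix.mulVec, dotProduct, Fin.sum_univ_two]; ring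
  have h1 : ((!![(1:ℝ),1/2;1/2,1]).mulVec z + q) 1 = z 0 / 2 + z 1 + q 1 := by
    simp [Matrix.mulVec, dotProduct, Fin.sum_univ_two]; ring
  constructor
  · rintro ⟨hz, hw, hs⟩
    refine ⟨hz 0, hz 1, ?_, ?_, ?_⟩
    · rw [← h0]; exact hw 0
    · rw [← h1]; exact hw 1
    · rw [← h0, ← h1]; simpa [Fin.sum_univ_two] using hs
  · rintro ⟨hz0, hz1, hw0, hw1, hs⟩
    refine ⟨?_, ?_, ?_⟩
    · rw [Fin.forall_fin_two]; exact ⟨hz0, hz1⟩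
    · rw [Fin.forall_fin_two]
      exact ⟨hw0.trans_eq h0.symm, hw1.trans_eq h1.symm⟩
    · rw [Fin.sum_univ_two, h0, h1]; exact hs

lemma uniq (q z w : Fin 2 → ℝ)
    (hz : IsLCPSol !![(1 : ℝ), 1/2; 1/2, 1] q z)
    (hw : IsLCPSol !![(1 : ℝ), 1/2; 1/2, 1] q w) : z = w := by
  rw [lcp_expand] at hz hw
  obtain ⟨hz0, hz1, hp0, hp1, hzs⟩ := hz
  obtain ⟨hw0, hw1, hq0, hq1, hws⟩ := hw
  have e1 : z 0 * (z 0 + z 1 / 2 + q 0) = 0 := by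
    linarith [mul_nonneg hz0 hp0, mul_nonneg hz1 hp1]
  have e2 : z 1 * (z 0 / 2 + z 1 + q 1) = 0 := by
    linarith [mul_nonneg hz0 hp0, mul_nonneg hz1 hp1]
  have f1 : w 0 * (w 0 + w 1 / 2 + q 0) = 0 := by
    linarith [mul_nonneg hw0 hq0, mul_nonneg hw1 hq1]
  have f2 : w 1 * (w 0 / 2 + w 1 + q 1) = 0 := by
    linarith [mul_nonneg hw0 hq0, mul_nonneg hw1 hq1]
  have key : (z 0 - w 0)^2 + (z 0 - w 0) * (z 1 - w 1) + (z 1 - w 1)^2 ≤ 0 := by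
    nlinarith [mul_nonneg hz0 hq0, mul_nonneg hz1 hq1, mul_nonneg hw0 hp0,
      mul_nonneg hw1 hp1]
  have ha : z 0 - w 0 = 0 := by
    have h2 : (z 0 - w 0)^2 ≤ 0 := by nlinarith [sq_nonneg (z 1 - w 1), sq_nonneg (z 0 - w 0 + (z 1 - w 1))]
    exact sq_eq_zero_iff.mp (le_antisymm h2 (sq_nonneg _))
  have hb : z 1 - w 1 = 0 := by
    have h2 : (z 1 - w 1)^2 ≤ 0 := by nlinarith [sq_nonneg (z 0 - w 0), sq_nonneg (z 0 - w 0 + (z 1 - w 1))]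
    exact sq_eq_zero_iff.mp (le_antisymm h2 (sq_nonneg _))
  funext i; fin_cases i
  · exact sub_eq_zero.mp ha
  · exact sub_eq_zero.mp hb

/-- for `M = [[1,1/2],[1/2,1]]`, `q̄ = (-5,-3)ᵀ`, and
`𝒰 = [-1,1]²`, every realization of the uncertain LCP has a unique
solution, but no AAR solution exists. -/
theorem stmt_16 :
    (∀ u : Fin 2 → ℝ, inBox ![1, 1] u →
      ∃! z : Fin 2 → ℝ,
        IsLCPSol !![(1 : ℝ), 1/2; 1/2, 1] (![-5, -3] + u) z) ∧
    ¬ ∃ (D : Matrix (Fin 2) (Fin 2) ℝ) (r : Fin 2 → ℝ),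
        IsAAR !![(1 : ℝ), 1/2; 1/2, 1] ![-5, -3] ![1, 1] D r := by
  constructor
  · intro u hu
    obtain ⟨hu0l, hu0r⟩ := hu 0
    obtain ⟨hu1l, hu1r⟩ := hu 1
    simp only [Matrix.cons_val_zero, Matrix.cons_val_one, Matrix.head_cons] at hu0l hu0r hu1l hu1r
    have hq0 : (![(-5 : ℝ), -3] + u) 0 = -5 + u 0 := by simp
    have hq1 : (![(-5 : ℝ), -3] + u) 1 = -3 + u 1 := by simp
    by_cases hc : 2 * u 1 - u 0 ≤ 1
    · have hv : IsLCPSol !![(1 : ℝ), 1/2; 1/2, 1] (![-5, -3] + u)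
          ![(14 - 4 * u 0 + 2 * u 1)/3, (2 + 2 * u 0 - 4 * u 1)/3] := by
        rw [lcp_expand]
        simp only [Matrix.cons_val_zero, Matrix.cons_val_one, Matrix.head_cons, hq0, hq1]
        refine ⟨by linarith, by linarith, by linarith, by linarith, by ring⟩
      exact ⟨_, hv, fun y hy => uniq _ _ _ hy hv⟩
    · push_neg at hc
      have hv : IsLCPSol !![(1 : ℝ), 1/2; 1/2, 1] (![-5, -3] + u) ![5 - u 0, 0] := by
        rw [lcp_expand]
        simp only [Matrix.cons_val_zero, Matrix.cons_val_one, Matrix.head_cons, hq0, hq1]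
        refine ⟨by linarith, by linarith, by linarith, by linarith, by ring⟩
      exact ⟨_, hv, fun y hy => uniq _ _ _ hy hv⟩
  · rintro ⟨D, r, hA⟩
    have box : ∀ a b : ℝ, -1 ≤ a → a ≤ 1 → -1 ≤ b → b ≤ 1 → inBox ![1,1] ![a,b] := by
      intro a b h1 h2 h3 h4 i
      fin_cases i <;> simp <;> constructor <;> linarith
    have s1 := hA ![1,-1] (box 1 (-1) (by norm_num) (by norm_num) (by norm_num) (by norm_num))
    have s2 := hA ![-1,1] (box (-1) 1 (by norm_num) (by norm_num) (by norm_num) (by norm_num))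
    have s3 := hA ![0,0] (box 0 0 (by norm_num) (by norm_num) (by norm_num) (by norm_num))
    have e1 : D.mulVec ![1,-1] + r = ![8/3, 8/3] := by
      refine uniq _ _ _ s1 ?_
      rw [lcp_expand]
      norm_num [Matrix.cons_val_zero, Matrix.cons_val_one, Matrix.head_cons]
    have e2 : D.mulVec ![-1,1] + r = ![6, 0] := by
      refine uniq _ _ _ s2 ?_
      rw [lcp_expand]
      norm_num [Matrix.cons_val_zero, Matrix.cons_val_one, Matrix.head_cons]
    have e3 : D.mulVec ![0,0] + r = ![14/3, 2/3] := by
      refine uniq _ _ _ s3 ?_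
      rw [lcp_expand]
      norm_num [Matrix.cons_val_zero, Matrix.cons_val_one, Matrix.head_cons]
    have c1 := congrFun e1 1
    have c2 := congrFun e2 1
    have c3 := congrFun e3 1
    simp only [Pi.add_apply, Matrix.mulVec, dotProduct, Fin.sum_univ_two,
      Matrix.cons_val_zero, Matrix.cons_val_one, Matrix.head_cons] at c1 c2 c3
    linarith
end
end

section
/- Let M(ζ) = M⁰ + Σ_{i=1}^k ζ_i Mⁱ and 𝒰 = [-1,1]^k. If z(ζ) = Dζ + r is an AAR solution of the matrix-uncertain LCP (0 ≤ z(ζ) ⊥ M(ζ)z(ζ) + q ≥ 0 for all ζ ∈ 𝒰), then with J = {j : r_j > 0}: (1) M⁰_J r_J + q_J = 0; (2) Mⁱ_J r_J + M⁰_J D_{J,i} = 0 for all i ∈ [k]; (3) Mⁱ_J D_{J,i} = 0 for all i ∈ [k]; (4) Mⁱ_J D_{J,j} + Mʲ_J D_{J,i} = 0 for all distinct i,j ∈ [k]. -/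
open Matrix BigOperators
open scoped Classical

noncomputable section

/-- `z(ζ) = Dζ + r` is an affinely adjustable robust solution of the
matrix-uncertain LCP `0 ≤ z(ζ) ⊥ M(ζ) z(ζ) + q ≥ 0` for all `ζ ∈ [-1,1]^k`,
where `M(ζ) = M⁰ + Σ ζ_i Mⁱ`. -/
def IsAARM {n k : ℕ} (M0 : Matrix (Fin n) (Fin n) ℝ)
    (Mi : Fin k → Matrix (Fin n) (Fin n) ℝ) (q : Fin n → ℝ)
    (D : Matrix (Fin n) (Fin k) ℝ) (r : Fin n → ℝ) : Prop :=
  ∀ ζ : Fin k → ℝ, (∀ t, -1 ≤ ζ t ∧ ζ t ≤ 1) →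
    (∀ i, 0 ≤ (D.mulVec ζ + r) i) ∧
    (∀ i, 0 ≤ ((M0 + ∑ t, ζ t • Mi t).mulVec (D.mulVec ζ + r) + q) i) ∧
    ∑ i, (D.mulVec ζ + r) i *
        ((M0 + ∑ t, ζ t • Mi t).mulVec (D.mulVec ζ + r) + q) i = 0

lemma aar_expand (n k : ℕ) (M0 : Matrix (Fin n) (Fin n) ℝ)
    (Mi : Fin k → Matrix (Fin n) (Fin n) ℝ) (q : Fin n → ℝ)
    (D : Matrix (Fin n) (Fin k) ℝ) (r : Fin n → ℝ) (i : Fin n) (ζ : Fin k → ℝ) :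
    ((M0 + ∑ t, ζ t • Mi t).mulVec (D.mulVec ζ + r) + q) i
    = (∑ l, M0 i l * r l + q i)
      + (∑ t, ζ t * (∑ l, (Mi t) i l * r l + ∑ l, M0 i l * D l t))
      + ∑ t, ∑ s, ζ t * ζ s * (∑ l, (Mi t) i l * D l s) := by
  have per : ∀ l, (M0 i l + ∑ t, ζ t * Mi t i l) * (∑ t, D l t * ζ t + r l)
      = M0 i l * r l + ∑ t, ζ t * ((Mi t) i l * r l + M0 i l * D l t)
        + ∑ t, ∑ s, ζ t * ζ s * ((Mi t) i l * D l s) := by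
    intro l
    have e1 : (∑ t, ζ t * Mi t i l) * (∑ t, D l t * ζ t)
        = ∑ t, ∑ s, ζ t * ζ s * ((Mi t) i l * D l s) := by
      rw [Finset.sum_mul_sum]
      exact Finset.sum_congr rfl fun t _ => Finset.sum_congr rfl fun s _ => by ring
    have e2 : ∑ t, ζ t * ((Mi t) i l * r l + M0 i l * D l t)
        = (∑ t, ζ t * Mi t i l) * r l + M0 i l * (∑ t, D l t * ζ t) := by
      rw [Finset.sum_mul, Finset.mul_sum, ← Finset.sum_add_distrib]
      exact Finset.sum_congr rfl fun t _ => by ring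
    rw [e2, ← e1]; ring
  have lhs : ((M0 + ∑ t, ζ t • Mi t).mulVec (D.mulVec ζ + r) + q) i
      = ∑ l, (M0 i l + ∑ t, ζ t * Mi t i l) * (∑ t, D l t * ζ t + r l) + q i := by
    simp [Matrix.mulVec, dotProduct, Matrix.add_apply, Matrix.sum_apply, mul_comm]
  rw [lhs, Finset.sum_congr rfl (fun l _ => per l),
    Finset.sum_add_distrib, Finset.sum_add_distrib]
  have h3 : ∑ l, ∑ t, ∑ s, ζ t * ζ s * ((Mi t) i l * D l s)
      = ∑ t, ∑ s, ζ t * ζ s * (∑ l, (Mi t) i l * D l s) := by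
    rw [Finset.sum_comm]
    refine Finset.sum_congr rfl fun t _ => ?_
    rw [Finset.sum_comm]
    exact Finset.sum_congr rfl fun s _ => (Finset.mul_sum _ _ _).symm
  have h2 : ∑ l, ∑ t, ζ t * ((Mi t) i l * r l + M0 i l * D l t)
      = ∑ t, ζ t * (∑ l, (Mi t) i l * r l + ∑ l, M0 i l * D l t) := by
    rw [Finset.sum_comm]
    refine Finset.sum_congr rfl fun t _ => ?_
    rw [mul_add, Finset.mul_sum, Finset.mul_sum, ← Finset.sum_add_distrib]
    exact Finset.sum_congr rfl fun l _ => mul_add _ _ _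
  rw [h3, h2]; ring

lemma aar_aux (n k : ℕ) (M0 : Matrix (Fin n) (Fin n) ℝ)
    (Mi : Fin k → Matrix (Fin n) (Fin n) ℝ) (q : Fin n → ℝ)
    (D : Matrix (Fin n) (Fin k) ℝ) (r : Fin n → ℝ)
    (hAAR : IsAARM M0 Mi q D r) (i : Fin n) (hri : 0 < r i) :
    (∑ l, M0 i l * r l + q i = 0) ∧
    (∀ t, ∑ l, (Mi t) i l * r l + ∑ l, M0 i l * D l t = 0) ∧
    (∀ t, ∑ l, (Mi t) i l * D l t = 0) ∧
    (∀ t s, t ≠ s → ∑ l, (Mi t) i l * D l s + ∑ l, (Mi s) i l * D l t = 0) := by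
  set A : ℝ := ∑ l, M0 i l * r l + q i with hA
  set B : Fin k → ℝ := fun t => ∑ l, (Mi t) i l * r l + ∑ l, M0 i l * D l t with hB
  set C : Fin k → Fin k → ℝ := fun t s => ∑ l, (Mi t) i l * D l s with hC
  -- complementarity at any admissible ζ making z_i positive
  have comp : ∀ ζ : Fin k → ℝ, (∀ t, -1 ≤ ζ t ∧ ζ t ≤ 1) →
      0 < (D.mulVec ζ + r) i →
      A + (∑ t, ζ t * B t) + ∑ t, ∑ s, ζ t * ζ s * C t s = 0 := by
    intro ζ hζ hz
    obtain ⟨h1, h2, h3⟩ := hAAR ζ hζ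
    have hterm := (Finset.sum_eq_zero_iff_of_nonneg
      (fun l _ => mul_nonneg (h1 l) (h2 l))).mp h3 i (Finset.mem_univ i)
    have := (mul_eq_zero.mp hterm).resolve_left (ne_of_gt hz)
    rw [aar_expand] at this
    exact this
  have zval : ∀ ζ : Fin k → ℝ, (D.mulVec ζ + r) i = ∑ u, D i u * ζ u + r i := by
    intro ζ; simp [Matrix.mulVec, dotProduct]
  -- (1) A = 0
  have hA0 : A = 0 := by
    have := comp 0 (fun t => by norm_num) (by simp [zval]; exact hri)
    simpa using this
  -- single-index evaluation
  have single : ∀ (t : Fin k) (c : ℝ), |c| ≤ 1 → |c| * |D i t| < r i →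
      A + c * B t + c * c * C t t = 0 := by
    intro t c hc1 hc2
    set ζ : Fin k → ℝ := fun u => if u = t then c else 0 with hζdef
    have hbd : ∀ u, -1 ≤ ζ u ∧ ζ u ≤ 1 := by
      intro u
      simp only [hζdef]
      split
      · exact abs_le.mp hc1
      · norm_num
    have hz : 0 < (D.mulVec ζ + r) i := by
      rw [zval]
      have hcoll : ∑ u, D i u * ζ u = D i t * c := by
        simp [hζdef, mul_ite, mul_zero]
      rw [hcoll]
      have habs : |D i t * c| < r i := by
        rw [abs_mul, mul_comm]; exact hc2
      have := (abs_lt.mp habs).1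
      linarith
    have := comp ζ hbd hz
    have e1 : ∑ u, ζ u * B u = c * B t := by simp [hζdef, ite_mul, zero_mul]
    have e2 : ∑ u, ∑ v, ζ u * ζ v * C u v = c * c * C t t := by
      simp [hζdef, ite_mul, zero_mul, mul_ite, mul_zero]
    rw [e1, e2] at this
    exact this
  -- choose positive epsilon for single index
  have singleBC : ∀ t : Fin k, B t = 0 ∧ C t t = 0 := by
    intro t
    set ε : ℝ := min 1 (r i / (1 + |D i t|)) with hε
    have habs : (0:ℝ) ≤ |D i t| := abs_nonneg _
    have hεpos : 0 < ε := by
      apply lt_min one_pos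
      positivity
    have hε1 : ε ≤ 1 := min_le_left _ _
    have hεr : ε * |D i t| < r i := by
      have h2 : ε ≤ r i / (1 + |D i t|) := min_le_right _ _
      rw [le_div_iff₀ (by positivity)] at h2
      nlinarith
    have habs1 : |ε| ≤ 1 := by rw [abs_of_pos hεpos]; exact hε1
    have habs2 : |ε| * |D i t| < r i := by rw [abs_of_pos hεpos]; exact hεr
    have habs1' : |(-ε)| ≤ 1 := by rw [abs_neg]; exact habs1
    have habs2' : |(-ε)| * |D i t| < r i := by rw [abs_neg]; exact habs2
    have e1 := single t ε habs1 habs2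
    have e2 := single t (-ε) habs1' habs2'
    have e2' : A - ε * B t + ε * ε * C t t = 0 := by linear_combination e2
    have hεne : ε ≠ 0 := ne_of_gt hεpos
    have hB0 : B t = 0 := by
      have h : ε * B t = 0 := by linarith
      exact (mul_eq_zero.mp h).resolve_left hεne
    refine ⟨hB0, ?_⟩
    have h : ε * (ε * C t t) = 0 := by rw [hA0] at e1 e2'; linarith [mul_assoc ε ε (C t t)]
    exact (mul_eq_zero.mp ((mul_eq_zero.mp h).resolve_left hεne)).resolve_left hεne
  -- double-index evaluation
  have double : ∀ t s : Fin k, t ≠ s → C t s + C s t = 0 := by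
    intro t s hts
    set ε : ℝ := min 1 (r i / (1 + |D i t| + |D i s|)) with hε
    have habsn : (0:ℝ) ≤ |D i t| := abs_nonneg _
    have habsn' : (0:ℝ) ≤ |D i s| := abs_nonneg _
    have hεpos : 0 < ε := by
      apply lt_min one_pos
      positivity
    have hε1 : ε ≤ 1 := min_le_left _ _
    have hεr : ε * (|D i t| + |D i s|) < r i := by
      have h2 : ε ≤ r i / (1 + |D i t| + |D i s|) := min_le_right _ _
      rw [le_div_iff₀ (by positivity)] at h2
      nlinarith
    set ζ : Fin k → ℝ := fun u => (if u = t then ε else 0) + (if u = s then ε else 0) with hζdef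
    have hbd : ∀ u, -1 ≤ ζ u ∧ ζ u ≤ 1 := by
      intro u
      simp only [hζdef]
      rcases eq_or_ne u t with h | h
      · subst h
        simp [hts]
        constructor <;> linarith
      · rcases eq_or_ne u s with h' | h'
        · subst h'
          simp [h]
          constructor <;> linarith
        · simp [h, h']
    have hz : 0 < (D.mulVec ζ + r) i := by
      rw [zval]
      have hcoll : ∑ u, D i u * ζ u = D i t * ε + D i s * ε := by
        simp [hζdef, mul_add, mul_ite, mul_zero, Finset.sum_add_distrib]
      rw [hcoll]
      have h1 := neg_abs_le (D i t)
      have h2 := neg_abs_le (D i s)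
      nlinarith
    have := comp ζ hbd hz
    have e1 : ∑ u, ζ u * B u = ε * B t + ε * B s := by
      simp [hζdef, add_mul, ite_mul, zero_mul, Finset.sum_add_distrib]
    have e2 : ∑ u, ∑ v, ζ u * ζ v * C u v
        = ε*ε*C t t + ε*ε*C t s + ε*ε*C s t + ε*ε*C s s := by
      simp [hζdef, add_mul, mul_add, ite_mul, zero_mul, mul_ite, mul_zero,
        Finset.sum_add_distrib, hts, hts.symm]
      ring
    rw [e1, e2] at this
    have hBt := (singleBC t).1
    have hBs := (singleBC s).1
    have hCt := (singleBC t).2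
    have hCs := (singleBC s).2
    rw [hA0, hBt, hBs, hCt, hCs] at this
    have : ε * ε * (C t s + C s t) = 0 := by linarith
    have hne : ε * ε ≠ 0 := by positivity
    exact (mul_eq_zero.mp this).resolve_left hne
  exact ⟨hA0, fun t => (singleBC t).1, fun t => (singleBC t).2, double⟩

/-- necessary conditions for an AAR solution of the
matrix-uncertain LCP, with `J = {j : r_j > 0}`. -/
theorem stmt_17 (n k : ℕ) (M0 : Matrix (Fin n) (Fin n) ℝ)
    (Mi : Fin k → Matrix (Fin n) (Fin n) ℝ) (q : Fin n → ℝ)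
    (D : Matrix (Fin n) (Fin k) ℝ) (r : Fin n → ℝ)
    (hr : ∀ j, 0 ≤ r j)
    (hD0 : ∀ j : Fin n, r j = 0 → ∀ t, D j t = 0)
    (hAAR : IsAARM M0 Mi q D r) :
    -- (1) `M⁰_J r_J + q_J = 0`
    (∀ i : Fin n, 0 < r i →
      ∑ l ∈ Finset.univ.filter (fun l : Fin n => 0 < r l), M0 i l * r l + q i = 0) ∧
    -- (2) `Mⁱ_J r_J + M⁰_J D_{J,i} = 0`
    (∀ i : Fin n, 0 < r i → ∀ t : Fin k,
      ∑ l ∈ Finset.univ.filter (fun l : Fin n => 0 < r l),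
          (Mi t) i l * r l
        + ∑ l ∈ Finset.univ.filter (fun l : Fin n => 0 < r l),
            M0 i l * D l t = 0) ∧
    -- (3) `Mⁱ_J D_{J,i} = 0`
    (∀ i : Fin n, 0 < r i → ∀ t : Fin k,
      ∑ l ∈ Finset.univ.filter (fun l : Fin n => 0 < r l),
        (Mi t) i l * D l t = 0) ∧
    -- (4) `Mⁱ_J D_{J,j} + Mʲ_J D_{J,i} = 0` for `i ≠ j`
    (∀ i : Fin n, 0 < r i → ∀ t s : Fin k, t ≠ s →
      ∑ l ∈ Finset.univ.filter (fun l : Fin n => 0 < r l),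
          (Mi t) i l * D l s
        + ∑ l ∈ Finset.univ.filter (fun l : Fin n => 0 < r l),
            (Mi s) i l * D l t = 0) := by
  have hr0 : ∀ l : Fin n, ¬ 0 < r l → r l = 0 := fun l h => le_antisymm (not_lt.mp h) (hr l)
  have hfr : ∀ (f : Fin n → ℝ),
      ∑ l ∈ Finset.univ.filter (fun l : Fin n => 0 < r l), f l * r l = ∑ l, f l * r l := by
    intro f
    refine Finset.sum_subset (Finset.filter_subset _ _) (fun l _ hl => ?_)
    rw [hr0 l (by simpa using hl), mul_zero]
  have hfD : ∀ (f : Fin n → ℝ) (t : Fin k),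
      ∑ l ∈ Finset.univ.filter (fun l : Fin n => 0 < r l), f l * D l t = ∑ l, f l * D l t := by
    intro f t
    refine Finset.sum_subset (Finset.filter_subset _ _) (fun l _ hl => ?_)
    rw [hD0 l (hr0 l (by simpa using hl)) t, mul_zero]
  refine ⟨fun i hi => ?_, fun i hi t => ?_, fun i hi t => ?_, fun i hi t s hts => ?_⟩
  · rw [hfr]
    exact (aar_aux n k M0 Mi q D r hAAR i hi).1
  · rw [hfr, hfD]
    exact (aar_aux n k M0 Mi q D r hAAR i hi).2.1 t
  · rw [hfD]
    exact (aar_aux n k M0 Mi q D r hAAR i hi).2.2.1 t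
  · rw [hfD, hfD]
    exact (aar_aux n k M0 Mi q D r hAAR i hi).2.2.2 t s hts
end
end

section
/- Let z(ζ) = Dζ + r be an AAR solution of the matrix-uncertain LCP with J = {j : r_j > 0}, and suppose M⁰_J is invertible. Then r and D are uniquely determined by: r_J = -(M⁰_J)^{-1} q_J, D_{J,i} = (M⁰_J)^{-1} Mⁱ_J (M⁰_J)^{-1} q_J for all i ∈ [k], r_N = 0, and D_{N,·} = 0 where N = [n]∖J. -/
open Matrix BigOperators
open scoped Classical

noncomputable section

/-! Complementarity `zᵢ(ζ) wᵢ(ζ) = 0` holds for every `ζ` in the box. At `ζ = 0` it forces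
`(M⁰ r + q)_J = 0`. For `i ∉ J` we have `rᵢ = 0`, and `zᵢ(± eₜ) = ± Dᵢₜ ≥ 0` forces `Dᵢₜ = 0`.
For `i ∈ J`, `zᵢ(± ε eₜ) > 0` for small `ε`, so `wᵢ(± ε eₜ) = ± ε (Mᵗ r + M⁰ Dₜ)ᵢ + ε² (…)`
vanishes at both signs, which kills the linear coefficient. Since `r` and `Dₜ` vanish off `J`,
restricting these identities to `J` gives the square systems `M⁰_J r_J = -q_J` and
`M⁰_J D_{J,t} = -Mᵗ_J r_J`, which are solved by inverting `M⁰_J`. -/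

lemma Fintype.sum_subtype_of_eq_zero {ι M : Type*} [Fintype ι] [AddCommMonoid M]
    {p : ι → Prop} [DecidablePred p] (f : ι → M) (hf : ∀ i, ¬ p i → f i = 0) :
    ∑ i : {i // p i}, f i = ∑ i, f i := by
  rw [← Finset.sum_subtype (Finset.univ.filter p) (by simp) f]
  exact Finset.sum_filter_of_ne fun i _ hi => not_not.1 fun h => hi (hf i h)

lemma Matrix.submatrix_mulVec_comp_val {ι R : Type*} [Fintype ι] [NonUnitalNonAssocSemiring R]
    {p : ι → Prop} [DecidablePred p] (A : Matrix ι ι R) (x : ι → R)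
    (hx : ∀ i, ¬ p i → x i = 0) :
    A.submatrix (Subtype.val : {i // p i} → ι) Subtype.val *ᵥ
        (x ∘ (Subtype.val : {i // p i} → ι)) = (A *ᵥ x) ∘ (Subtype.val : {i // p i} → ι) := by
  funext i
  exact Fintype.sum_subtype_of_eq_zero (fun j => A i j * x j) fun j hj => by simp [hx j hj]

lemma Pi.smul_single_one_apply_mem_Icc {k : Type*} [DecidableEq k] (t s : k) {ε : ℝ}
    (hε : |ε| ≤ 1) : (ε • Pi.single t 1 : k → ℝ) s ∈ Set.Icc (-1) 1 := by
  rw [Set.mem_Icc, ← abs_le]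
  by_cases hs : s = t
  · subst hs; simpa using hε
  · simp [hs]

lemma Matrix.add_smul_mulVec_smul_add {ι R : Type*} [Fintype ι] [CommRing R]
    (A B : Matrix ι ι R) (d r q : ι → R) (ε : R) :
    (A + ε • B) *ᵥ (ε • d + r) + q = (A *ᵥ r + q) + ε • (B *ᵥ r + A *ᵥ d) + ε ^ 2 • (B *ᵥ d) := by
  simp only [add_mulVec, mulVec_add, smul_mulVec, mulVec_smul]
  module

namespace IsAARM

variable {n k : ℕ} {M0 : Matrix (Fin n) (Fin n) ℝ} {Mi : Fin k → Matrix (Fin n) (Fin n) ℝ}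
  {q : Fin n → ℝ} {D : Matrix (Fin n) (Fin k) ℝ} {r : Fin n → ℝ}

lemma complementary (h : IsAARM M0 Mi q D r) {ζ : Fin k → ℝ} (hζ : ∀ t, -1 ≤ ζ t ∧ ζ t ≤ 1)
    (i : Fin n) :
    (D *ᵥ ζ + r) i * ((M0 + ∑ t, ζ t • Mi t) *ᵥ (D *ᵥ ζ + r) + q) i = 0 := by
  obtain ⟨hz, hw, hsum⟩ := h ζ hζ
  exact (Finset.sum_eq_zero_iff_of_nonneg fun j _ => mul_nonneg (hz j) (hw j)).1 hsum i
    (Finset.mem_univ i)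

lemma apply_mulVec_add_eq_zero (h : IsAARM M0 Mi q D r) {i : Fin n} (hi : 0 < r i) :
    (M0 *ᵥ r + q) i = 0 := by
  have := h.complementary (ζ := 0) (fun _ => by norm_num) i
  simp only [mulVec_zero, zero_add, Pi.zero_apply, zero_smul, Finset.sum_const_zero, add_zero]
    at this
  exact (mul_eq_zero.1 this).resolve_left hi.ne'

lemma along_axis (h : IsAARM M0 Mi q D r) (t : Fin k) {ε : ℝ} (hε : |ε| ≤ 1) (i : Fin n) :
    0 ≤ (ε • D.col t + r) i ∧
    (ε • D.col t + r) i * ((M0 *ᵥ r + q) + ε • (Mi t *ᵥ r + M0 *ᵥ D.col t) +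
      ε ^ 2 • (Mi t *ᵥ D.col t)) i = 0 := by
  have hζ := fun s => Pi.smul_single_one_apply_mem_Icc t s hε
  have hz : D *ᵥ (ε • Pi.single t 1) = ε • D.col t := by rw [mulVec_smul, mulVec_single_one]
  have hM : ∑ s, (ε • Pi.single t 1 : Fin k → ℝ) s • Mi s = ε • Mi t := by
    simp [Pi.single_apply]
  refine ⟨?_, ?_⟩
  · simpa only [hz] using (h _ hζ).1 i
  · simpa only [hz, hM, add_smul_mulVec_smul_add] using h.complementary hζ i

lemma apply_eq_zero_of_apply_eq_zero (h : IsAARM M0 Mi q D r) {i : Fin n} (hi : r i = 0)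
    (t : Fin k) : D i t = 0 := by
  have h₁ := (h.along_axis t (ε := 1) (by norm_num) i).1
  have h₂ := (h.along_axis t (ε := -1) (by norm_num) i).1
  simp only [Pi.add_apply, Pi.smul_apply, col_apply, smul_eq_mul, hi, add_zero] at h₁ h₂
  linarith

lemma apply_linear_coeff_eq_zero (h : IsAARM M0 Mi q D r) {i : Fin n} (hi : 0 < r i)
    (t : Fin k) : (Mi t *ᵥ r + M0 *ᵥ D.col t) i = 0 := by
  -- For `0 < ε ≤ r i / (r i + |D i t|)` both `z(± ε eₜ)ᵢ` stay positive, so the slack vanishes.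
  set ε := r i / (r i + |D i t|)
  have hpos : 0 < r i + |D i t| := by positivity
  have hε : 0 < ε := by positivity
  have hε₁ : ε ≤ 1 := by
    rw [div_le_one hpos]; linarith [abs_nonneg (D i t)]
  have hεD : ε * |D i t| < r i := by
    rw [div_mul_eq_mul_div, div_lt_iff₀ hpos]; nlinarith
  have slack (δ : ℝ) (hδ : |δ| = ε) :
      δ * (Mi t *ᵥ r + M0 *ᵥ D.col t) i + δ ^ 2 * (Mi t *ᵥ D.col t) i = 0 := by
    have hz : (δ • D.col t + r) i ≠ 0 := by
      have := neg_abs_le (δ * D i t)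
      simp only [Pi.add_apply, Pi.smul_apply, col_apply, smul_eq_mul]
      rw [abs_mul, hδ] at this
      linarith
    have := (mul_eq_zero.1 (h.along_axis t (hδ.trans_le hε₁) i).2).resolve_left hz
    simp only [Pi.add_apply, Pi.smul_apply, smul_eq_mul, h.apply_mulVec_add_eq_zero hi] at this
    rw [Pi.add_apply]
    linear_combination this
  have hright := slack ε (abs_of_pos hε)
  have hleft := slack (-ε) (by rw [abs_neg, abs_of_pos hε])
  have : 2 * ε * (Mi t *ᵥ r + M0 *ᵥ D.col t) i = 0 := by linear_combination hright - hleft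
  simpa [hε.ne'] using this

end IsAARM

lemma Matrix.eq_inv_mulVec_of_mulVec_eq {ι R : Type*} [Fintype ι] [DecidableEq ι] [CommRing R]
    {A : Matrix ι ι R} (hA : IsUnit A.det) {x b : ι → R} (h : A *ᵥ x = b) : x = A⁻¹ *ᵥ b := by
  rw [← h, mulVec_mulVec, nonsing_inv_mul A hA, one_mulVec]

/-- if `z(ζ) = Dζ + r` is an AAR solution of the
matrix-uncertain LCP with `J = {j : r_j > 0}` and `M⁰_J` invertible, then
`r` and `D` are uniquely determined by the stated formulas. -/
theorem stmt_18 (n k : ℕ) (M0 : Matrix (Fin n) (Fin n) ℝ)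
    (Mi : Fin k → Matrix (Fin n) (Fin n) ℝ) (q : Fin n → ℝ)
    (D : Matrix (Fin n) (Fin k) ℝ) (r : Fin n → ℝ)
    (hr : ∀ j, 0 ≤ r j)
    (hAAR : IsAARM M0 Mi q D r)
    (hinv : IsUnit (Matrix.of fun i j : {l : Fin n // 0 < r l} =>
        M0 i.1 j.1).det) :
    -- `r_J = -(M⁰_J)⁻¹ q_J`
    (∀ i : {l : Fin n // 0 < r l},
      r i.1 = -(((Matrix.of fun a b : {l : Fin n // 0 < r l} =>
          M0 a.1 b.1))⁻¹.mulVec (fun j : {l : Fin n // 0 < r l} => q j.1)) i) ∧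
    -- `D_{J,i} = (M⁰_J)⁻¹ Mⁱ_J (M⁰_J)⁻¹ q_J`
    (∀ (t : Fin k) (i : {l : Fin n // 0 < r l}),
      D i.1 t =
        ((((Matrix.of fun a b : {l : Fin n // 0 < r l} => M0 a.1 b.1))⁻¹ *
          (Matrix.of fun a b : {l : Fin n // 0 < r l} => (Mi t) a.1 b.1) *
          ((Matrix.of fun a b : {l : Fin n // 0 < r l} => M0 a.1 b.1))⁻¹).mulVec
            (fun j : {l : Fin n // 0 < r l} => q j.1)) i) ∧
    -- `r_N = 0`
    (∀ i : Fin n, ¬ 0 < r i → r i = 0) ∧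
    -- `D_{N,·} = 0`
    (∀ i : Fin n, ¬ 0 < r i → ∀ t, D i t = 0) := by
  have hN (i : Fin n) (hi : ¬ 0 < r i) : r i = 0 := le_antisymm (not_lt.1 hi) (hr i)
  have hDN (i : Fin n) (hi : ¬ 0 < r i) (t : Fin k) : D i t = 0 :=
    hAAR.apply_eq_zero_of_apply_eq_zero (hN i hi) t
  have hrJ : r ∘ Subtype.val = -((Matrix.of fun a b : {l : Fin n // 0 < r l} =>
      M0 a.1 b.1)⁻¹ *ᵥ (q ∘ Subtype.val)) := by
    rw [← mulVec_neg]
    refine eq_inv_mulVec_of_mulVec_eq hinv ?_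
    refine (M0.submatrix_mulVec_comp_val r hN).trans (funext fun i => ?_)
    exact eq_neg_of_add_eq_zero_left (hAAR.apply_mulVec_add_eq_zero i.2)
  refine ⟨fun i => congrFun hrJ i, fun t i => ?_, hN, hDN⟩
  have hDJ : D.col t ∘ Subtype.val =
      -((Matrix.of fun a b : {l : Fin n // 0 < r l} => M0 a.1 b.1)⁻¹ *ᵥ
        ((Mi t).submatrix Subtype.val (Subtype.val : {l // 0 < r l} → Fin n) *ᵥ
          (r ∘ Subtype.val))) := by
    rw [← mulVec_neg]
    refine eq_inv_mulVec_of_mulVec_eq hinv ?_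
    refine (M0.submatrix_mulVec_comp_val _ fun j hj => hDN j hj t).trans ?_
    rw [(Mi t).submatrix_mulVec_comp_val r hN]
    funext i
    exact eq_neg_of_add_eq_zero_right (hAAR.apply_linear_coeff_eq_zero i.2 t)
  rw [hrJ, mulVec_neg, mulVec_neg, neg_neg, mulVec_mulVec, mulVec_mulVec] at hDJ
  exact congrFun hDJ i
end
end
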